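/- arXiv:1312.3652 — 5 statements merged into one kernel-verified Lean document; each statement's English description precedes it below -/
import Mathlib

section
/- Let S = k[x_1,...,x_n] and let B_L be the S-module with presentation matrix [d_2^L X], where d_2^L is the second Koszul differential on the variables x_1,...,x_m (a binomial(m,2) × binomial(m,3) matrix) and X = [x_{m+1}·Id x_{m+2}·Id ... x_n·Id] with Id the identity matrix of size binomial(m,2). Then the annihilator of B_L equals the ideal (x_{m+1},...,x_n), provided m ≥ 2. -/
/-!
The ideal `I = (x_{m+1}, …, x_n)` kills `B_L` because `x_{m+r} e_p` are among the relations.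
Conversely, pair the relations with the `j`-th row `δ` of the Koszul differential `d₁`:
`δ · d₂ = 0` since `d₁ d₂ = 0`, and `δ` sends the remaining relations into `I`. So if `f`
kills `B_L`, then `δ(f e_{ij}) = f x_i ∈ I` for `i < j`, and `f ∈ I` as `I` is a monomial ideal
generated by variables other than `x_i`.
-/

noncomputable section

open MvPolynomial

variable (K : Type) [Field K] [CharZero K] (n m : ℕ)

/-- Index set for the standard basis of `Λ² k^m`: pairs `i < j`. -/
abbrev Pairs (m : ℕ) := {p : Fin m × Fin m // p.1 < p.2}

/-- Index set for the standard basis of `Λ³ k^m`: triples `i < j < k`. -/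
abbrev Triples (m : ℕ) := {t : Fin m × Fin m × Fin m // t.1 < t.2.1 ∧ t.2.1 < t.2.2}

/-- The presentation matrix `[d₂^L  X]` : its columns are indexed by triples
(the Koszul relations `x_a e_{bc} - x_b e_{ac} + x_c e_{ab}`) together with
pairs `(r, p)` (the relations `x_{m+r} e_p`). -/
def presMatrix (hmn : m ≤ n) :
    Matrix (Pairs m) (Triples m ⊕ (Fin (n - m) × Pairs m)) (MvPolynomial (Fin n) K) :=
  fun p c =>
    Sum.elim
      (fun t : Triples m =>
        if p.1 = (t.1.2.1, t.1.2.2) then X (Fin.castLE hmn t.1.1)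
        else if p.1 = (t.1.1, t.1.2.2) then -X (Fin.castLE hmn t.1.2.1)
        else if p.1 = (t.1.1, t.1.2.1) then X (Fin.castLE hmn t.1.2.2)
        else 0)
      (fun rp : Fin (n - m) × Pairs m =>
        if p = rp.2 then X (⟨m + rp.1, by omega⟩ : Fin n) else 0)
      c

/-- The module `B_L`: the cokernel of the presentation matrix `[d₂^L  X]`. -/
def BL (hmn : m ≤ n) : Type :=
  (Pairs m → MvPolynomial (Fin n) K) ⧸
    LinearMap.range (Matrix.mulVecLin (presMatrix K n m hmn))

instance (hmn : m ≤ n) : AddCommGroup (BL K n m hmn) :=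
  inferInstanceAs (AddCommGroup ((Pairs m → MvPolynomial (Fin n) K) ⧸
    LinearMap.range (Matrix.mulVecLin (presMatrix K n m hmn))))

instance (hmn : m ≤ n) : Module (MvPolynomial (Fin n) K) (BL K n m hmn) :=
  inferInstanceAs (Module (MvPolynomial (Fin n) K)
    ((Pairs m → MvPolynomial (Fin n) K) ⧸
      LinearMap.range (Matrix.mulVecLin (presMatrix K n m hmn))))

theorem MvPolynomial.mem_ideal_span_X_image_of_mul_X_mem {σ R : Type*} [CommSemiring R]
    {s : Set σ} {j : σ} (hj : j ∉ s) {f : MvPolynomial σ R}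
    (h : f * X j ∈ Ideal.span (X '' s : Set (MvPolynomial σ R))) :
    f ∈ Ideal.span (X '' s : Set (MvPolynomial σ R)) := by
  rw [mem_ideal_span_X_image] at h ⊢
  intro d hd
  obtain ⟨i, hi, hne⟩ := h (d + Finsupp.single j 1) (by simpa using hd)
  have hij : j ≠ i := fun hji => hj (hji ▸ hi)
  exact ⟨i, hi, by simpa [Finsupp.single_apply, hij] using hne⟩

section

open Matrix

variable {k : Type} [Field k] {n m : ℕ}

theorem setOf_exists_X_eq :
    {z : MvPolynomial (Fin n) k | ∃ i : Fin n, m ≤ (i : ℕ) ∧ z = X i} =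
      X '' {i : Fin n | m ≤ (i : ℕ)} := by
  ext z
  simp [eq_comm]

theorem X_smul_mem_range_presMatrix (hmn : m ≤ n) {i : Fin n} (hi : m ≤ (i : ℕ))
    (v : Pairs m → MvPolynomial (Fin n) k) :
    (X i : MvPolynomial (Fin n) k) • v ∈
      LinearMap.range (mulVecLin (presMatrix k n m hmn)) := by
  set r : Fin (n - m) := ⟨i - m, by omega⟩
  have hr : (⟨m + r, by omega⟩ : Fin n) = i := Fin.ext (by simp [r]; omega)
  refine ⟨Sum.elim 0 fun rp => if rp.1 = r then v rp.2 else 0, funext fun q => ?_⟩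
  simp [mulVec, dotProduct, presMatrix, Fintype.sum_sum_type, Fintype.sum_prod_type,
    ite_mul, mul_ite, hr]

theorem span_X_le_annihilator_BL (hmn : m ≤ n) :
    Ideal.span (X '' {i : Fin n | m ≤ (i : ℕ)} : Set (MvPolynomial (Fin n) k)) ≤
      Module.annihilator (MvPolynomial (Fin n) k) (BL k n m hmn) := by
  rw [Ideal.span_le]
  rintro _ ⟨i, hi, rfl⟩
  rw [SetLike.mem_coe, Module.mem_annihilator]
  intro b
  obtain ⟨v, rfl⟩ := Submodule.Quotient.mk_surjective _ b
  exact (Submodule.Quotient.mk_eq_zero _).2 (X_smul_mem_range_presMatrix hmn hi v)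

/-- The `j`-th row of the Koszul differential `d₁ : Λ² k^m ⊗ S → k^m ⊗ S`. -/
def koszulRow (hmn : m ≤ n) (j : Fin m) : Pairs m → MvPolynomial (Fin n) k := fun q =>
  (if q.1.2 = j then X (Fin.castLE hmn q.1.1) else 0) -
    (if q.1.1 = j then X (Fin.castLE hmn q.1.2) else 0)

theorem koszulRow_apply_of_snd_eq (hmn : m ≤ n) {a j : Fin m} (h : a < j) :
    koszulRow (k := k) hmn j ⟨(a, j), h⟩ = X (Fin.castLE hmn a) := by
  simp [koszulRow, h.ne]

theorem presMatrix_col_inl (hmn : m ≤ n) {a b c : Fin m} (hab : a < b) (hbc : b < c) :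
    (fun q => presMatrix k n m hmn q (Sum.inl ⟨(a, b, c), hab, hbc⟩)) =
      Pi.single (⟨(b, c), hbc⟩ : Pairs m) (X (Fin.castLE hmn a)) +
        Pi.single (⟨(a, c), hab.trans hbc⟩ : Pairs m) (-X (Fin.castLE hmn b)) +
        Pi.single (⟨(a, b), hab⟩ : Pairs m) (X (Fin.castLE hmn c)) := by
  funext ⟨⟨q₁, q₂⟩, hq⟩
  simp only [presMatrix, Sum.elim_inl, Pi.add_apply, Pi.single_apply, Subtype.mk.injEq,
    Prod.mk.injEq]
  split_ifs <;> simp_all only [Fin.ext_iff, Fin.lt_def, add_zero, zero_add] <;> omega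

theorem koszulRow_vecMul_presMatrix_inl (hmn : m ≤ n) (j : Fin m) (t : Triples m) :
    (koszulRow hmn j ᵥ* presMatrix k n m hmn) (Sum.inl t) = 0 := by
  obtain ⟨⟨a, b, c⟩, hab, hbc⟩ := t
  rw [vecMul, presMatrix_col_inl hmn hab hbc]
  simp only [dotProduct_add, dotProduct_single, koszulRow]
  split_ifs <;> ring

theorem koszulRow_vecMul_presMatrix_mem (hmn : m ≤ n) (j : Fin m)
    (c : Triples m ⊕ (Fin (n - m) × Pairs m)) :
    (koszulRow hmn j ᵥ* presMatrix k n m hmn) c ∈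
      Ideal.span (X '' {i : Fin n | m ≤ (i : ℕ)}) := by
  rcases c with t | ⟨r, p⟩
  · rw [koszulRow_vecMul_presMatrix_inl]
    exact zero_mem _
  · have hcol : (fun q => presMatrix k n m hmn q (Sum.inr (r, p))) =
        Pi.single p (X ⟨m + r, by omega⟩) := by
      funext q
      simp [presMatrix, Pi.single_apply]
    rw [vecMul, hcol, dotProduct_single]
    exact Ideal.mul_mem_left _ _ (Ideal.subset_span ⟨_, by simp, rfl⟩)

theorem koszulRow_dotProduct_mem_of_mem_range (hmn : m ≤ n) (j : Fin m)
    {v : Pairs m → MvPolynomial (Fin n) k}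
    (hv : v ∈ LinearMap.range (mulVecLin (presMatrix k n m hmn))) :
    koszulRow hmn j ⬝ᵥ v ∈ Ideal.span (X '' {i : Fin n | m ≤ (i : ℕ)}) := by
  obtain ⟨u, rfl⟩ := hv
  rw [mulVecLin_apply, dotProduct_mulVec]
  exact Ideal.sum_mem _ fun c _ =>
    Ideal.mul_mem_right _ _ (koszulRow_vecMul_presMatrix_mem hmn j c)

theorem annihilator_BL_le_span_X (hm : 2 ≤ m) (hmn : m ≤ n) :
    Module.annihilator (MvPolynomial (Fin n) k) (BL k n m hmn) ≤
      Ideal.span (X '' {i : Fin n | m ≤ (i : ℕ)}) := by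
  intro f hf
  obtain ⟨a, j, haj⟩ : ∃ a j : Fin m, a < j :=
    ⟨⟨0, by omega⟩, ⟨1, by omega⟩, Fin.mk_lt_mk.2 one_pos⟩
  have hrel : f • Pi.single ⟨(a, j), haj⟩ 1 ∈
      LinearMap.range (mulVecLin (presMatrix k n m hmn)) := by
    have h : f • (Submodule.Quotient.mk (Pi.single ⟨(a, j), haj⟩ 1) : BL k n m hmn) = 0 :=
      Module.mem_annihilator.1 hf _
    exact (Submodule.Quotient.mk_eq_zero _).1 h
  have hmul := koszulRow_dotProduct_mem_of_mem_range hmn j hrel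
  rw [dotProduct_smul, dotProduct_single, mul_one, koszulRow_apply_of_snd_eq, smul_eq_mul] at hmul
  exact MvPolynomial.mem_ideal_span_X_image_of_mul_X_mem (by simp) hmul

end

/-- Let `S = k[x_1,...,x_n]` and `B_L` the `S`-module with presentation matrix
`[d₂^L  X]`, where `d₂^L` is the second Koszul differential on `x_1,...,x_m`
and `X = [x_{m+1}·Id ⋯ x_n·Id]`.  If `2 ≤ m ≤ n`, then the annihilator of
`B_L` is the ideal `(x_{m+1}, ..., x_n)`. -/
theorem annihilator_BL (hm : 2 ≤ m) (hmn : m ≤ n) :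
    Module.annihilator (MvPolynomial (Fin n) K) (BL K n m hmn) =
      Ideal.span {z | ∃ i : Fin n, m ≤ (i : ℕ) ∧ z = X i} := by
  rw [setOf_exists_X_eq]
  exact le_antisymm (annihilator_BL_le_span_X hm hmn) (span_X_le_annihilator_BL hmn)
end
end

section
/- Let E be the exterior algebra over a field k of characteristic 0 on generators e_1,...,e_n, let L be the span of e_1,...,e_m (with 2 ≤ m ≤ n), and let I_L be the ideal of E generated by {e_i ∧ e_j : 1 ≤ i < j ≤ m}. Then the colon ideal I_L : (e_1,...,e_m) equals the ideal (e_1,...,e_m). -/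
/-!
A vector anticommutes with every element up to the grade involution, so `(L)·(L) ⊆ I_L`.

Conversely, let `π` be the algebra endomorphism induced by the coordinate projection killing `L`.
Then `π` kills `(L)` and `x - π x ∈ (L)` for every `x`. If `x·(L) ⊆ I_L`, then also
`π x ∧ e_1 ∈ I_L`. Right contraction with `e_1^*` turns an element of `I_L` into one whose terms
still contain a vector of `L`, so `π` kills it; but it turns `π x ∧ e_1` into `π x` modulo `(L)`.
Hence `π x = 0` and `x ∈ (L)`.
-/

open ExteriorAlgebra

namespace CliffordAlgebra

variable {R M : Type*} [CommRing R] [AddCommGroup M] [Module R M] {Q : QuadraticForm R M}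

theorem contractRight_mul (d : Module.Dual R M) (x y : CliffordAlgebra Q) :
    contractRight (x * y) d = x * contractRight y d + contractRight x d * involute y := by
  induction y using CliffordAlgebra.induction generalizing x with
  | algebraMap r =>
    rw [contractRight_mul_algebraMap, contractRight_algebraMap, mul_zero, zero_add,
      AlgHom.commutes]
  | ι b =>
    rw [contractRight_mul_ι, contractRight_ι, involute_ι, mul_neg, ← Algebra.commutes,
      ← Algebra.smul_def, sub_eq_add_neg]
  | mul a b ha hb =>
    rw [← mul_assoc, hb, ha, hb a, map_mul involute]
    noncomm_ring
  | add a b ha hb =>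
    simp only [mul_add, map_add, LinearMap.add_apply, ha, hb]
    abel

end CliffordAlgebra

namespace ExteriorAlgebra

variable {R M : Type*} [CommRing R] [AddCommGroup M] [Module R M]

theorem ι_mul_eq_involute_mul (v : M) (x : ExteriorAlgebra R M) :
    ι R v * x = CliffordAlgebra.involute x * ι R v := by
  induction x using ExteriorAlgebra.induction with
  | algebraMap r => rw [AlgHom.commutes, Algebra.commutes]
  | ι w =>
    rw [CliffordAlgebra.involute_ι, neg_mul]
    exact eq_neg_of_add_eq_zero_left (ι_add_mul_swap v w)
  | mul a b ha hb => rw [← mul_assoc, ha, mul_assoc, hb, ← mul_assoc, ← map_mul]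
  | add a b ha hb => rw [mul_add, ha, hb, map_add, add_mul]

theorem map_involute {N : Type*} [AddCommGroup N] [Module R N] (f : M →ₗ[R] N)
    (x : ExteriorAlgebra R M) :
    map f (CliffordAlgebra.involute x) = CliffordAlgebra.involute (map f x) := by
  have : (map f).comp CliffordAlgebra.involute = CliffordAlgebra.involute.comp (map f) :=
    hom_ext (LinearMap.ext fun v => by simp)
  exact DFunLike.congr_fun this x

def vectorIdeal (S : Set M) : TwoSidedIdeal (ExteriorAlgebra R M) :=
  TwoSidedIdeal.span (ι R '' S)

/-- The ideal `I_L` of the paper, for `L` spanned by `S`. -/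
def wedgeIdeal (S : Set M) : TwoSidedIdeal (ExteriorAlgebra R M) :=
  TwoSidedIdeal.span (Set.image2 (fun s t => ι R s * ι R t) S S)

variable {S : Set M}

theorem ι_mem_vectorIdeal {v : M} (hv : v ∈ Submodule.span R S) :
    ι R v ∈ vectorIdeal (R := R) S := by
  induction hv using Submodule.span_induction with
  | mem s hs => exact TwoSidedIdeal.subset_span ⟨s, hs, rfl⟩
  | zero => rw [map_zero]; exact TwoSidedIdeal.zero_mem _
  | add u w _ _ hu hw => rw [map_add]; exact TwoSidedIdeal.add_mem _ hu hw
  | smul r u _ hu =>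
    rw [map_smul, Algebra.smul_def]; exact TwoSidedIdeal.mul_mem_left _ _ _ hu

theorem wedgeIdeal_le_vectorIdeal : wedgeIdeal (R := R) S ≤ vectorIdeal S :=
  TwoSidedIdeal.span_le.2 <| Set.image2_subset_iff.2 fun _ _ t ht =>
    TwoSidedIdeal.mul_mem_left _ _ _ (TwoSidedIdeal.subset_span ⟨t, ht, rfl⟩)

theorem ι_mul_mem_wedgeIdeal {s : M} (hs : s ∈ S) {y : ExteriorAlgebra R M}
    (hy : y ∈ vectorIdeal S) : ι R s * y ∈ wedgeIdeal S := by
  induction hy using TwoSidedIdeal.span_induction with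
  | mem y hy =>
    obtain ⟨t, ht, rfl⟩ := hy
    exact TwoSidedIdeal.subset_span ⟨s, hs, t, ht, rfl⟩
  | zero => rw [mul_zero]; exact TwoSidedIdeal.zero_mem _
  | add y z _ _ hy hz => rw [mul_add]; exact TwoSidedIdeal.add_mem _ hy hz
  | neg y _ hy => rw [mul_neg]; exact TwoSidedIdeal.neg_mem _ hy
  | left_absorb a y _ hy =>
    rw [← mul_assoc, ι_mul_eq_involute_mul, mul_assoc]
    exact TwoSidedIdeal.mul_mem_left _ _ _ hy
  | right_absorb b y _ hy =>
    rw [← mul_assoc]; exact TwoSidedIdeal.mul_mem_right _ _ _ hy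

theorem mul_mem_wedgeIdeal {x y : ExteriorAlgebra R M} (hx : x ∈ vectorIdeal S)
    (hy : y ∈ vectorIdeal S) : x * y ∈ wedgeIdeal S := by
  induction hx using TwoSidedIdeal.span_induction generalizing y with
  | mem x hx =>
    obtain ⟨s, hs, rfl⟩ := hx
    exact ι_mul_mem_wedgeIdeal hs hy
  | zero => rw [zero_mul]; exact TwoSidedIdeal.zero_mem _
  | add x z _ _ hx hz => rw [add_mul]; exact TwoSidedIdeal.add_mem _ (hx hy) (hz hy)
  | neg x _ hx => rw [neg_mul]; exact TwoSidedIdeal.neg_mem _ (hx hy)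
  | left_absorb a x _ hx => rw [mul_assoc]; exact TwoSidedIdeal.mul_mem_left _ _ _ (hx hy)
  | right_absorb b x _ hx =>
    rw [mul_assoc]; exact hx (TwoSidedIdeal.mul_mem_left _ _ _ hy)

section Projection

variable {p : M →ₗ[R] M}

theorem map_eq_zero_of_mem_vectorIdeal (hp : ∀ s ∈ S, p s = 0) {x : ExteriorAlgebra R M}
    (hx : x ∈ vectorIdeal S) : map p x = 0 := by
  induction hx using TwoSidedIdeal.span_induction with
  | mem x hx =>
    obtain ⟨s, hs, rfl⟩ := hx
    rw [map_apply_ι, hp s hs, map_zero]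
  | zero => exact map_zero _
  | add x y _ _ hx hy => rw [map_add, hx, hy, add_zero]
  | neg x _ hx => rw [map_neg, hx, neg_zero]
  | left_absorb a x _ hx => rw [map_mul, hx, mul_zero]
  | right_absorb b x _ hx => rw [map_mul, hx, zero_mul]

theorem sub_map_mem_vectorIdeal (hp : ∀ v, v - p v ∈ Submodule.span R S)
    (x : ExteriorAlgebra R M) : x - map p x ∈ vectorIdeal S := by
  induction x using ExteriorAlgebra.induction with
  | algebraMap r => rw [AlgHom.commutes, sub_self]; exact TwoSidedIdeal.zero_mem _
  | ι v => rw [map_apply_ι, ← map_sub]; exact ι_mem_vectorIdeal (hp v)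
  | mul a b ha hb =>
    rw [show a * b - map p (a * b) = (a - map p a) * b + map p a * (b - map p b) by
      rw [map_mul]; noncomm_ring]
    exact TwoSidedIdeal.add_mem _ (TwoSidedIdeal.mul_mem_right _ _ _ ha)
      (TwoSidedIdeal.mul_mem_left _ _ _ hb)
  | add a b ha hb =>
    rw [map_add, add_sub_add_comm]; exact TwoSidedIdeal.add_mem _ ha hb

theorem map_contractRight_eq_zero_of_mem_wedgeIdeal (hp : ∀ s ∈ S, p s = 0)
    (d : Module.Dual R M) {y : ExteriorAlgebra R M} (hy : y ∈ wedgeIdeal S) :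
    map p (CliffordAlgebra.contractRight y d) = 0 := by
  induction hy using TwoSidedIdeal.span_induction with
  | mem y hy =>
    obtain ⟨s, hs, t, ht, rfl⟩ := hy
    simp [CliffordAlgebra.contractRight_mul_ι, map_apply_ι, hp t ht, hp s hs]
  | zero => rw [map_zero, LinearMap.zero_apply, map_zero]
  | add x y _ _ hx hy => rw [map_add, LinearMap.add_apply, map_add, hx, hy, add_zero]
  | neg x _ hx => rw [map_neg, LinearMap.neg_apply, map_neg, hx, neg_zero]
  | left_absorb a y hy hy' =>
    rw [CliffordAlgebra.contractRight_mul, map_add, map_mul, map_mul, hy', map_involute,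
      map_eq_zero_of_mem_vectorIdeal hp (wedgeIdeal_le_vectorIdeal hy), map_zero, mul_zero,
      mul_zero, add_zero]
  | right_absorb b y _ hy' =>
    rw [CliffordAlgebra.contractRight_mul, map_add, map_mul, map_mul, hy', zero_mul,
      map_eq_zero_of_mem_vectorIdeal hp (wedgeIdeal_le_vectorIdeal ‹_›), zero_mul, zero_add]

theorem mem_vectorIdeal_of_mul_mem_wedgeIdeal (hker : ∀ s ∈ S, p s = 0)
    (hrange : ∀ v, v - p v ∈ Submodule.span R S) {v₀ : M} (hv₀ : v₀ ∈ S)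
    {d : Module.Dual R M} (hd : d v₀ = 1) {x : ExteriorAlgebra R M}
    (hx : ∀ y ∈ vectorIdeal S, x * y ∈ wedgeIdeal S) : x ∈ vectorIdeal S := by
  have hx' := sub_map_mem_vectorIdeal hrange x
  have hv₀' : ι R v₀ ∈ vectorIdeal S := TwoSidedIdeal.subset_span ⟨v₀, hv₀, rfl⟩
  have hw : map p x * ι R v₀ ∈ wedgeIdeal S := by
    rw [show map p x * ι R v₀ = x * ι R v₀ - (x - map p x) * ι R v₀ by noncomm_ring]
    exact TwoSidedIdeal.sub_mem _ (hx _ hv₀') (mul_mem_wedgeIdeal hx' hv₀')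
  have hpw : map p (map p x) = map p x := by
    have := map_eq_zero_of_mem_vectorIdeal hker hx'
    rwa [map_sub, sub_eq_zero, eq_comm] at this
  -- contracting `map p x ∧ v₀` with `d` and projecting gives back `map p x`
  have hw0 : map p x = 0 := by
    have := map_contractRight_eq_zero_of_mem_wedgeIdeal hker d hw
    rwa [CliffordAlgebra.contractRight_mul_ι, hd, one_smul, map_sub, map_mul, map_apply_ι,
      hker v₀ hv₀, map_zero, mul_zero, sub_zero, hpw] at this
  rwa [hw0, sub_zero] at hx'

theorem colon_wedgeIdeal_vectorIdeal (hker : ∀ s ∈ S, p s = 0)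
    (hrange : ∀ v, v - p v ∈ Submodule.span R S) {v₀ : M} (hv₀ : v₀ ∈ S)
    {d : Module.Dual R M} (hd : d v₀ = 1) :
    {x | ∀ y ∈ vectorIdeal S, x * y ∈ wedgeIdeal S} = ((vectorIdeal S : TwoSidedIdeal (ExteriorAlgebra R M)) : Set (ExteriorAlgebra R M)) :=
  Set.ext fun _ => ⟨mem_vectorIdeal_of_mul_mem_wedgeIdeal hker hrange hv₀ hd,
    fun hx _ hy => mul_mem_wedgeIdeal hx hy⟩

end Projection

section Coordinates

variable (R : Type*) [CommRing R] (n m : ℕ)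

/-- The standard basis vectors `e_i`, `i < m`, spanning `L`. -/
def leadingBasisVectors : Set (Fin n → R) :=
  {v | ∃ i : Fin n, (i : ℕ) < m ∧ v = Pi.single i 1}

def dropLeadingCoords : (Fin n → R) →ₗ[R] (Fin n → R) :=
  LinearMap.pi fun i => if (i : ℕ) < m then 0 else LinearMap.proj i

theorem dropLeadingCoords_apply_of_mem (v : Fin n → R) (hv : v ∈ leadingBasisVectors R n m) :
    dropLeadingCoords R n m v = 0 := by
  obtain ⟨i, hi, rfl⟩ := hv
  ext j
  by_cases hj : (j : ℕ) < m
  · simp [dropLeadingCoords, hj]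
  · simp [dropLeadingCoords, hj, Pi.single_eq_of_ne (fun h : j = i => hj (h ▸ hi))]

theorem sub_dropLeadingCoords_mem_span (v : Fin n → R) :
    v - dropLeadingCoords R n m v ∈ Submodule.span R (leadingBasisVectors R n m) := by
  rw [← Finset.univ_sum_single (v - dropLeadingCoords R n m v)]
  refine Submodule.sum_mem _ fun i _ => ?_
  by_cases hi : (i : ℕ) < m
  · rw [← mul_one ((v - dropLeadingCoords R n m v) i), ← smul_eq_mul, Pi.single_smul']
    exact Submodule.smul_mem _ _ (Submodule.subset_span ⟨i, hi, rfl⟩)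
  · simp [dropLeadingCoords, hi]

theorem span_ι_single_eq_vectorIdeal :
    TwoSidedIdeal.span {z | ∃ i : Fin n, (i : ℕ) < m ∧ z = ι R (Pi.single i (1 : R))} =
      vectorIdeal (leadingBasisVectors R n m) := by
  unfold vectorIdeal leadingBasisVectors
  congr 1
  ext z
  grind

theorem span_ι_single_mul_ι_single_eq_wedgeIdeal :
    TwoSidedIdeal.span {z | ∃ i j : Fin n, (i : ℕ) < (j : ℕ) ∧ (j : ℕ) < m ∧
        z = ι R (Pi.single i (1 : R)) * ι R (Pi.single j (1 : R))} =
      wedgeIdeal (leadingBasisVectors R n m) := by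
  refine le_antisymm (TwoSidedIdeal.span_mono ?_) (TwoSidedIdeal.span_le.2 ?_)
  · rintro _ ⟨i, j, hij, hj, rfl⟩
    exact ⟨_, ⟨i, hij.trans hj, rfl⟩, _, ⟨j, hj, rfl⟩, rfl⟩
  · rintro _ ⟨_, ⟨i, hi, rfl⟩, _, ⟨j, hj, rfl⟩, rfl⟩
    dsimp only
    rcases lt_trichotomy (i : ℕ) j with hij | hij | hij
    · exact TwoSidedIdeal.subset_span ⟨i, j, hij, hj, rfl⟩
    · rw [Fin.ext hij, ι_sq_zero]
      exact TwoSidedIdeal.zero_mem _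
    · rw [eq_neg_of_add_eq_zero_left (ι_add_mul_swap _ _)]
      exact TwoSidedIdeal.neg_mem _ (TwoSidedIdeal.subset_span ⟨j, i, hij, hi, rfl⟩)

end Coordinates

end ExteriorAlgebra

theorem exterior_colon_ideal_general (K : Type*) [Field K]
    (n m : ℕ) (hm : 2 ≤ m) (hmn : m ≤ n) :
    {x : ExteriorAlgebra K (Fin n → K) |
        ∀ y ∈ TwoSidedIdeal.span
          {z | ∃ i : Fin n, (i : ℕ) < m ∧ z = ι K (Pi.single i (1 : K))},
          x * y ∈ TwoSidedIdeal.span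
            {z | ∃ i j : Fin n, (i : ℕ) < (j : ℕ) ∧ (j : ℕ) < m ∧
              z = ι K (Pi.single i (1 : K)) * ι K (Pi.single j (1 : K))}} =
      (TwoSidedIdeal.span
        {z | ∃ i : Fin n, (i : ℕ) < m ∧ z = ι K (Pi.single i (1 : K))} :
        Set (ExteriorAlgebra K (Fin n → K))) := by
  let i₀ : Fin n := ⟨0, by omega⟩
  rw [span_ι_single_eq_vectorIdeal, span_ι_single_mul_ι_single_eq_wedgeIdeal]
  exact colon_wedgeIdeal_vectorIdeal (dropLeadingCoords_apply_of_mem K n m)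
    (sub_dropLeadingCoords_mem_span K n m) ⟨i₀, show 0 < m by omega, rfl⟩
    (d := LinearMap.proj i₀) (by simp)

/-- In the exterior algebra `E = Λ(e_1, ..., e_n)` over a field of
characteristic zero, with `L = span{e_1, ..., e_m}` (`2 ≤ m ≤ n`) and `I_L` the
two-sided ideal generated by `{e_i ∧ e_j : 1 ≤ i < j ≤ m}`, the colon ideal
`I_L : (e_1, ..., e_m) = {x ∈ E : x·(e_1,...,e_m) ⊆ I_L}` equals the two-sided
ideal `(e_1, ..., e_m)`.  (Indices are `0`-based: `e_i = ι (Pi.single i 1)`.) -/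
theorem exterior_colon_ideal (K : Type*) [Field K] [CharZero K]
    (n m : ℕ) (hm : 2 ≤ m) (hmn : m ≤ n) :
    {x : ExteriorAlgebra K (Fin n → K) |
        ∀ y ∈ TwoSidedIdeal.span
          {z | ∃ i : Fin n, (i : ℕ) < m ∧ z = ι K (Pi.single i (1 : K))},
          x * y ∈ TwoSidedIdeal.span
            {z | ∃ i j : Fin n, (i : ℕ) < (j : ℕ) ∧ (j : ℕ) < m ∧
              z = ι K (Pi.single i (1 : K)) * ι K (Pi.single j (1 : K))}} =
      (TwoSidedIdeal.span
        {z | ∃ i : Fin n, (i : ℕ) < m ∧ z = ι K (Pi.single i (1 : K))} :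
        Set (ExteriorAlgebra K (Fin n → K))) :=
  exterior_colon_ideal_general K n m hm hmn
end

section
/- The type B Coxeter arrangement B_n in C^n (hyperplanes ker(x_i), 1 ≤ i ≤ n, and ker(x_i ± x_j), 1 ≤ i < j ≤ n) has exactly binomial(n,2) rank-two flats of multiplicity 4, exactly 4·binomial(n,3) rank-two flats of multiplicity 3, and exactly 6·binomial(n,3) + 12·binomial(n,4) rank-two flats of multiplicity 2. -/
open LinearMap

/-- The type `B_n` Coxeter arrangement in `ℂ^n`: the hyperplanes `ker x_i`
together with `ker (x_i - x_j)` and `ker (x_i + x_j)` for `i < j`. -/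
def typeBArrangement (n : ℕ) : Set (Submodule ℂ (Fin n → ℂ)) :=
  {H | (∃ i : Fin n, H = ker (proj i : (Fin n → ℂ) →ₗ[ℂ] ℂ)) ∨
    ∃ i j : Fin n, i < j ∧
      (H = ker ((proj i : (Fin n → ℂ) →ₗ[ℂ] ℂ) - proj j) ∨
       H = ker ((proj i : (Fin n → ℂ) →ₗ[ℂ] ℂ) + proj j))}

/-- The rank-two flats of an arrangement: intersections of two distinct
hyperplanes of the arrangement. -/
def rankTwoFlats {n : ℕ} (A : Set (Submodule ℂ (Fin n → ℂ))) :
    Set (Submodule ℂ (Fin n → ℂ)) :=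
  {F | ∃ H ∈ A, ∃ H' ∈ A, H ≠ H' ∧ F = H ⊓ H'}

/-- The multiplicity of a flat: the number of hyperplanes of the arrangement
containing it. -/
noncomputable def flatMultiplicity {n : ℕ} (A : Set (Submodule ℂ (Fin n → ℂ)))
    (F : Submodule ℂ (Fin n → ℂ)) : ℕ :=
  {H ∈ A | F ≤ H}.ncard

namespace TypeBAux

variable {n : ℕ}

noncomputable def Pm (i : Fin n) : Submodule ℂ (Fin n → ℂ) := ker (proj i : (Fin n → ℂ) →ₗ[ℂ] ℂ)

noncomputable def Hm (i j : Fin n) (a : ℂ) : Submodule ℂ (Fin n → ℂ) :=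
  ker ((proj i : (Fin n → ℂ) →ₗ[ℂ] ℂ) + a • proj j)

lemma mem_Pm {i : Fin n} {x : Fin n → ℂ} : x ∈ Pm i ↔ x i = 0 := by
  simp [Pm, LinearMap.mem_ker]

lemma mem_Hm {i j : Fin n} {a : ℂ} {x : Fin n → ℂ} :
    x ∈ Hm i j a ↔ x i + a * x j = 0 := by
  simp [Hm, LinearMap.mem_ker, smul_eq_mul]

lemma arr_eq :
    typeBArrangement n =
      {H | (∃ i, H = Pm i) ∨
        ∃ i j a, i < j ∧ (a = 1 ∨ a = (-1 : ℂ)) ∧ H = Hm i j a} := by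
  ext H
  constructor
  · rintro (⟨i, rfl⟩ | ⟨i, j, hij, (rfl | rfl)⟩)
    · exact Or.inl ⟨i, rfl⟩
    · refine Or.inr ⟨i, j, -1, hij, Or.inr rfl, ?_⟩
      simp [Hm, sub_eq_add_neg, neg_one_smul]
    · refine Or.inr ⟨i, j, 1, hij, Or.inl rfl, ?_⟩
      simp [Hm]
  · rintro (⟨i, rfl⟩ | ⟨i, j, a, hij, (rfl | rfl), rfl⟩)
    · exact Or.inl ⟨i, rfl⟩
    · refine Or.inr ⟨i, j, hij, Or.inr ?_⟩
      simp [Hm]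
    · refine Or.inr ⟨i, j, hij, Or.inl ?_⟩
      simp [Hm, sub_eq_add_neg, neg_one_smul]

end TypeBAux

namespace TypeBAux

variable {n : ℕ}

/-- sign helpers -/
lemma sgn_ne_zero {a : ℂ} (ha : a = 1 ∨ a = -1) : a ≠ 0 := by
  rcases ha with rfl | rfl <;> norm_num

lemma sgn_sq {a : ℂ} (ha : a = 1 ∨ a = -1) : a * a = 1 := by
  rcases ha with rfl | rfl <;> norm_num

lemma sgn_neg_mul {a b : ℂ} (ha : a = 1 ∨ a = -1) (hb : b = 1 ∨ b = -1) :
    -(a * b) = 1 ∨ -(a * b) = -1 := by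
  rcases ha with rfl | rfl <;> rcases hb with rfl | rfl <;> norm_num

/-- basis-like witness vectors -/
def ev (i : Fin n) : Fin n → ℂ := fun m => if m = i then 1 else 0

def wv (i j : Fin n) (a : ℂ) : Fin n → ℂ :=
  fun m => if m = i then 1 else if m = j then -a else 0

def tv (i j k : Fin n) (a b : ℂ) : Fin n → ℂ :=
  fun m => if m = i then 1 else if m = j then -a else if m = k then -b else 0

@[simp] lemma ev_self {i : Fin n} : ev i i = 1 := by simp [ev]
@[simp] lemma ev_ne {i m : Fin n} (h : m ≠ i) : ev i m = 0 := by simp [ev, h]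

lemma ev_mem_Pm {i m : Fin n} (h : m ≠ i) : ev m ∈ Pm i := by
  simp [mem_Pm, ev, h.symm]

lemma ev_mem_Hm {i j m : Fin n} {a : ℂ} (hi : m ≠ i) (hj : m ≠ j) :
    ev m ∈ Hm i j a := by
  simp [mem_Hm, ev, hi.symm, hj.symm]

lemma wv_mem_Hm {i j : Fin n} {a : ℂ} (hij : i ≠ j) (ha : a * a = 1) :
    wv i j a ∈ Hm i j a := by
  simp only [mem_Hm, wv, if_true, eq_self_iff_true]
  rw [if_neg hij.symm]
  linear_combination -ha

lemma wv_mem_Pm {i j c : Fin n} {a : ℂ} (hc1 : c ≠ i) (hc2 : c ≠ j) :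
    wv i j a ∈ Pm c := by
  simp [mem_Pm, wv, hc1, hc2]

lemma wv_mem_Hm' {i j c d : Fin n} {a b : ℂ} (h1 : c ≠ i) (h2 : c ≠ j)
    (h3 : d ≠ i) (h4 : d ≠ j) : wv i j a ∈ Hm c d b := by
  simp [mem_Hm, wv, h1, h2, h3, h4]

end TypeBAux

namespace TypeBAux

variable {n : ℕ}

lemma mem_arr_P (i : Fin n) : Pm i ∈ typeBArrangement n := by
  rw [arr_eq]; exact Or.inl ⟨i, rfl⟩

lemma mem_arr_H {i j : Fin n} {a : ℂ} (hij : i < j) (ha : a = 1 ∨ a = -1) :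
    Hm i j a ∈ typeBArrangement n := by
  rw [arr_eq]; exact Or.inr ⟨i, j, a, hij, ha, rfl⟩

lemma Pm_inj {i j : Fin n} (h : Pm i = Pm j) : i = j := by
  by_contra hne
  have h1 : ev j ∈ Pm i := ev_mem_Pm (Ne.symm hne)
  rw [h, mem_Pm] at h1
  simp at h1

lemma Pm_ne_Hm {i j k : Fin n} {a : ℂ} (hjk : j ≠ k) (ha : a ≠ 0) :
    Pm i ≠ Hm j k a := by
  intro h
  rcases eq_or_ne i j with rfl | hij
  · have h1 : ev k ∈ Pm i := ev_mem_Pm (Ne.symm hjk)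
    rw [h, mem_Hm] at h1
    simp [ev, hjk] at h1
    exact ha h1
  · have h1 : ev j ∈ Pm i := ev_mem_Pm (Ne.symm hij)
    rw [h, mem_Hm] at h1
    simp [ev, hjk.symm] at h1

lemma Hm_inj {i j k l : Fin n} {a b : ℂ} (hij : i < j) (hkl : k < l)
    (ha : a = 1 ∨ a = -1) (hb : b = 1 ∨ b = -1) (h : Hm i j a = Hm k l b) :
    i = k ∧ j = l ∧ a = b := by
  have hk : k = i ∨ k = j := by
    by_contra hc
    push_neg at hc
    have h1 : ev k ∈ Hm i j a := ev_mem_Hm hc.1 hc.2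
    rw [h, mem_Hm] at h1
    simp [ev, hkl.ne'] at h1
  have hl : l = i ∨ l = j := by
    by_contra hc
    push_neg at hc
    have h1 : ev l ∈ Hm i j a := ev_mem_Hm hc.1 hc.2
    rw [h, mem_Hm] at h1
    simp [ev, hkl.ne] at h1
    exact sgn_ne_zero hb h1
  rcases hk with rfl | rfl
  · rcases hl with rfl | rfl
    · exact absurd hkl (lt_irrefl _)
    · refine ⟨rfl, rfl, ?_⟩
      have h1 : wv k l a ∈ Hm k l a := wv_mem_Hm hij.ne (sgn_sq ha)
      rw [h, mem_Hm] at h1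
      simp only [wv, if_pos rfl, if_true, eq_self_iff_true] at h1
      rw [if_neg hij.ne'] at h1
      rcases ha with rfl | rfl <;> rcases hb with rfl | rfl <;> norm_num at h1 <;> rfl
  · rcases hl with rfl | rfl
    · exact absurd (hkl.trans hij) (lt_irrefl _)
    · exact absurd hkl (lt_irrefl _)

end TypeBAux

namespace TypeBAux

variable {n : ℕ}

lemma mem_inf2 {F G : Submodule ℂ (Fin n → ℂ)} {x : Fin n → ℂ} :
    x ∈ F ⊓ G ↔ x ∈ F ∧ x ∈ G := Submodule.mem_inf

lemma flatA_hyps {i j : Fin n} (hij : i < j) :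
    {H | H ∈ typeBArrangement n ∧ Pm i ⊓ Pm j ≤ H} =
      {Pm i, Pm j, Hm i j 1, Hm i j (-1)} := by
  ext H
  simp only [Set.mem_setOf_eq, Set.mem_insert_iff, Set.mem_singleton_iff]
  constructor
  · rintro ⟨hA, hle⟩
    rw [arr_eq] at hA
    rcases hA with ⟨c, rfl⟩ | ⟨c, d, a, hcd, ha, rfl⟩
    · rcases eq_or_ne c i with rfl | hci
      · exact Or.inl rfl
      rcases eq_or_ne c j with rfl | hcj
      · exact Or.inr (Or.inl rfl)
      · have h1 := mem_Pm.1 (hle (mem_inf2.2 ⟨ev_mem_Pm hci, ev_mem_Pm hcj⟩))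
        simp [ev] at h1
    · have hc : c = i ∨ c = j := by
        by_contra hc
        push_neg at hc
        have h1 := mem_Hm.1 (hle (mem_inf2.2 ⟨ev_mem_Pm hc.1, ev_mem_Pm hc.2⟩))
        simp [ev, hcd.ne'] at h1
      have hd : d = i ∨ d = j := by
        by_contra hc
        push_neg at hc
        have h1 := mem_Hm.1 (hle (mem_inf2.2 ⟨ev_mem_Pm hc.1, ev_mem_Pm hc.2⟩))
        simp [ev, hcd.ne] at h1
        exact sgn_ne_zero ha h1
      rcases hc with rfl | rfl
      · rcases hd with rfl | rfl
        · exact absurd hcd (lt_irrefl _)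
        · rcases ha with rfl | rfl
          · exact Or.inr (Or.inr (Or.inl rfl))
          · exact Or.inr (Or.inr (Or.inr rfl))
      · rcases hd with rfl | rfl
        · exact absurd (hcd.trans hij) (lt_irrefl _)
        · exact absurd hcd (lt_irrefl _)
  · have hsub : ∀ a : ℂ, Pm i ⊓ Pm j ≤ Hm i j a := by
      intro a x hx
      rw [mem_inf2, mem_Pm, mem_Pm] at hx
      rw [mem_Hm, hx.1, hx.2]; ring
    rintro (rfl | rfl | rfl | rfl)
    · exact ⟨mem_arr_P i, inf_le_left⟩
    · exact ⟨mem_arr_P j, inf_le_right⟩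
    · exact ⟨mem_arr_H hij (Or.inl rfl), hsub 1⟩
    · exact ⟨mem_arr_H hij (Or.inr rfl), hsub (-1)⟩

end TypeBAux

namespace TypeBAux

variable {n : ℕ}

lemma flatC_hyps {i j k : Fin n} (hjk : j < k) (hij : i ≠ j) (hik : i ≠ k)
    {a : ℂ} (ha : a = 1 ∨ a = -1) :
    {H | H ∈ typeBArrangement n ∧ Pm i ⊓ Hm j k a ≤ H} = {Pm i, Hm j k a} := by
  have hw : wv j k a ∈ Pm i ⊓ Hm j k a :=
    mem_inf2.2 ⟨wv_mem_Pm hij hik, wv_mem_Hm hjk.ne (sgn_sq ha)⟩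
  ext H
  simp only [Set.mem_setOf_eq, Set.mem_insert_iff, Set.mem_singleton_iff]
  constructor
  · rintro ⟨hA, hle⟩
    rw [arr_eq] at hA
    rcases hA with ⟨c, rfl⟩ | ⟨c, d, a', hcd, ha', rfl⟩
    · have hc : c = i ∨ c = j ∨ c = k := by
        by_contra hc
        push_neg at hc
        have h1 := mem_Pm.1 (hle (mem_inf2.2
          ⟨ev_mem_Pm hc.1, ev_mem_Hm hc.2.1 hc.2.2⟩))
        simp [ev] at h1
      have h1 := mem_Pm.1 (hle hw)
      rcases hc with rfl | rfl | rfl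
      · exact Or.inl rfl
      · simp [wv] at h1
      · rw [show wv j c a c = -a by simp [wv, hjk.ne']] at h1
        exact absurd (neg_eq_zero.1 h1) (sgn_ne_zero ha)
    · have hc : c = i ∨ c = j ∨ c = k := by
        by_contra hc
        push_neg at hc
        have h1 := mem_Hm.1 (hle (mem_inf2.2
          ⟨ev_mem_Pm hc.1, ev_mem_Hm hc.2.1 hc.2.2⟩))
        simp [ev, hcd.ne'] at h1
      have hd : d = i ∨ d = j ∨ d = k := by
        by_contra hc
        push_neg at hc
        have h1 := mem_Hm.1 (hle (mem_inf2.2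
          ⟨ev_mem_Pm hc.1, ev_mem_Hm hc.2.1 hc.2.2⟩))
        simp [ev, hcd.ne] at h1
        exact sgn_ne_zero ha' h1
      have h1 := mem_Hm.1 (hle hw)
      rcases hc with rfl | rfl | rfl <;> rcases hd with rfl | rfl | rfl
      · exact absurd hcd (lt_irrefl _)
      · simp [wv, hij, hik, hij.symm, hik.symm, hjk.ne, hjk.ne'] at h1
        exact absurd h1 (sgn_ne_zero ha')
      · simp [wv, hij, hik, hij.symm, hik.symm, hjk.ne, hjk.ne'] at h1
        rcases ha with rfl | rfl <;> rcases ha' with rfl | rfl <;>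
          norm_num at h1
      · simp [wv, hij, hik, hij.symm, hik.symm, hjk.ne, hjk.ne'] at h1
      · exact absurd hcd (lt_irrefl _)
      · -- c = j, d = k : the hyperplane itself, need a' = a
        simp [wv, hij, hik, hij.symm, hik.symm, hjk.ne, hjk.ne'] at h1
        have : a' = a := by
          rcases ha with rfl | rfl <;> rcases ha' with rfl | rfl <;>
            norm_num at h1 <;> rfl
        exact Or.inr (by rw [this])
      · simp [wv, hij, hik, hij.symm, hik.symm, hjk.ne, hjk.ne'] at h1
        exact absurd h1 (sgn_ne_zero ha)
      · exact absurd (hcd.trans hjk) (lt_irrefl _)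
      · exact absurd hcd (lt_irrefl _)
  · rintro (rfl | rfl)
    · exact ⟨mem_arr_P i, inf_le_left⟩
    · exact ⟨mem_arr_H hjk ha, inf_le_right⟩

end TypeBAux

namespace TypeBAux

variable {n : ℕ}

lemma flatD_hyps {i j k l : Fin n} (hij : i < j) (hkl : k < l) (hik : i < k)
    (hjk : j ≠ k) (hjl : j ≠ l) {a b : ℂ}
    (ha : a = 1 ∨ a = -1) (hb : b = 1 ∨ b = -1) :
    {H | H ∈ typeBArrangement n ∧ Hm i j a ⊓ Hm k l b ≤ H} =
      {Hm i j a, Hm k l b} := by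
  have hil : i < l := hik.trans hkl
  have hu : wv i j a ∈ Hm i j a ⊓ Hm k l b :=
    mem_inf2.2 ⟨wv_mem_Hm hij.ne (sgn_sq ha),
      wv_mem_Hm' hik.ne' hjk.symm hil.ne' hjl.symm⟩
  have hv : wv k l b ∈ Hm i j a ⊓ Hm k l b :=
    mem_inf2.2 ⟨wv_mem_Hm' hik.ne hil.ne hjk hjl, wv_mem_Hm hkl.ne (sgn_sq hb)⟩
  ext H
  simp only [Set.mem_setOf_eq, Set.mem_insert_iff, Set.mem_singleton_iff]
  constructor
  · rintro ⟨hA, hle⟩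
    rw [arr_eq] at hA
    rcases hA with ⟨c, rfl⟩ | ⟨c, d, a', hcd, ha', rfl⟩
    · have hc : c = i ∨ c = j ∨ c = k ∨ c = l := by
        by_contra hc
        push_neg at hc
        have h1 := mem_Pm.1 (hle (mem_inf2.2
          ⟨ev_mem_Hm hc.1 hc.2.1, ev_mem_Hm hc.2.2.1 hc.2.2.2⟩))
        simp [ev] at h1
      have h1 := mem_Pm.1 (hle hu)
      have h2 := mem_Pm.1 (hle hv)
      rcases hc with rfl | rfl | rfl | rfl
      · simp [wv] at h1
      · simp [wv, hij.ne'] at h1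
        exact absurd h1 (sgn_ne_zero ha)
      · simp [wv, hik.ne', hjk] at h2
      · simp [wv, hil.ne', hjl, hkl.ne'] at h2
        exact absurd h2 (sgn_ne_zero hb)
    · have hc : c = i ∨ c = j ∨ c = k ∨ c = l := by
        by_contra hc
        push_neg at hc
        have h1 := mem_Hm.1 (hle (mem_inf2.2
          ⟨ev_mem_Hm hc.1 hc.2.1, ev_mem_Hm hc.2.2.1 hc.2.2.2⟩))
        simp [ev, hcd.ne'] at h1
      have hd : d = i ∨ d = j ∨ d = k ∨ d = l := by
        by_contra hc
        push_neg at hc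
        have h1 := mem_Hm.1 (hle (mem_inf2.2
          ⟨ev_mem_Hm hc.1 hc.2.1, ev_mem_Hm hc.2.2.1 hc.2.2.2⟩))
        simp [ev, hcd.ne] at h1
        exact sgn_ne_zero ha' h1
      have h1 := mem_Hm.1 (hle hu)
      have h2 := mem_Hm.1 (hle hv)
      have sfacts := And.intro hij.ne (And.intro hik.ne hil.ne)
      rcases hc with rfl | rfl | rfl | rfl <;> rcases hd with rfl | rfl | rfl | rfl
      · exact absurd hcd (lt_irrefl _)
      · -- (i,j)
        simp [wv, hij.ne, hij.ne'] at h1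
        have : a' = a := by
          rcases ha with rfl | rfl <;> rcases ha' with rfl | rfl <;>
            norm_num at h1 <;> rfl
        exact Or.inl (by rw [this])
      · simp [wv, hik.ne, hik.ne', hjk, hjk.symm] at h1
      · simp [wv, hil.ne, hil.ne', hjl, hjl.symm] at h1
      · exact absurd (hcd.trans hij) (lt_irrefl _)
      · exact absurd hcd (lt_irrefl _)
      · simp [wv, hij.ne', hjk, hjk.symm, hik.ne'] at h1
        exact absurd h1 (sgn_ne_zero ha)
      · simp [wv, hij.ne', hjl, hjl.symm, hil.ne'] at h1
        exact absurd h1 (sgn_ne_zero ha)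
      · exact absurd (hcd.trans hik) (lt_irrefl _)
      · simp [wv, hik.ne, hik.ne', hjk, hjk.symm, hij.ne'] at h1
        rcases ha with rfl | rfl <;> rcases ha' with rfl | rfl <;> norm_num at h1
      · exact absurd hcd (lt_irrefl _)
      · -- (k,l)
        simp [wv, hkl.ne, hkl.ne', hik.ne', hil.ne', hjk, hjl] at h2
        have : a' = b := by
          rcases hb with rfl | rfl <;> rcases ha' with rfl | rfl <;>
            norm_num at h2 <;> rfl
        exact Or.inr (by rw [this])
      · exact absurd (hcd.trans hil) (lt_irrefl _)
      · simp [wv, hil.ne', hjl, hjl.symm, hij.ne'] at h1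
        rcases ha with rfl | rfl <;> rcases ha' with rfl | rfl <;> norm_num at h1
      · exact absurd (hcd.trans hkl) (lt_irrefl _)
      · exact absurd hcd (lt_irrefl _)
  · rintro (rfl | rfl)
    · exact ⟨mem_arr_H hij ha, inf_le_left⟩
    · exact ⟨mem_arr_H hkl hb, inf_le_right⟩

end TypeBAux

namespace TypeBAux

variable {n : ℕ}

lemma tv_mem_Hm1 {i j k : Fin n} {a b : ℂ} (hji : j ≠ i) (ha : a * a = 1) :
    tv i j k a b ∈ Hm i j a := by
  simp only [mem_Hm, tv, if_true, eq_self_iff_true]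
  rw [if_neg hji]
  linear_combination -ha

lemma tv_mem_Hm2 {i j k : Fin n} {a b : ℂ} (hki : k ≠ i) (hkj : k ≠ j)
    (hb : b * b = 1) : tv i j k a b ∈ Hm i k b := by
  simp only [mem_Hm, tv, if_true, eq_self_iff_true]
  rw [if_neg hki, if_neg hkj]
  linear_combination -hb

lemma tv_mem_Hm3 {i j k : Fin n} {a b : ℂ} (hji : j ≠ i) (hki : k ≠ i)
    (hkj : k ≠ j) (hb : b * b = 1) : tv i j k a b ∈ Hm j k (-(a * b)) := by
  simp only [mem_Hm, tv, if_true, eq_self_iff_true]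
  rw [if_neg hji, if_neg hki, if_neg hkj]
  linear_combination a * hb

lemma flatT_le3 {i j k : Fin n} (hij : i ≠ j) {a b : ℂ} (ha : a = 1 ∨ a = -1) :
    Hm i j a ⊓ Hm i k b ≤ Hm j k (-(a * b)) := by
  intro x hx
  rw [mem_inf2, mem_Hm, mem_Hm] at hx
  rw [mem_Hm]
  have ha2 := sgn_sq ha
  have h3 : a * (x j + -(a * b) * x k) = 0 := by
    linear_combination hx.1 - hx.2 - b * x k * ha2
  rcases mul_eq_zero.1 h3 with h | h
  · exact absurd h (sgn_ne_zero ha)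
  · exact h

lemma flatT_hyps {i j k : Fin n} (hij : i < j) (hjk : j < k)
    {a b : ℂ} (ha : a = 1 ∨ a = -1) (hb : b = 1 ∨ b = -1) :
    {H | H ∈ typeBArrangement n ∧ Hm i j a ⊓ Hm i k b ≤ H} =
      {Hm i j a, Hm i k b, Hm j k (-(a * b))} := by
  have hik : i < k := hij.trans hjk
  have hw : tv i j k a b ∈ Hm i j a ⊓ Hm i k b :=
    mem_inf2.2 ⟨tv_mem_Hm1 hij.ne' (sgn_sq ha), tv_mem_Hm2 hik.ne' hjk.ne' (sgn_sq hb)⟩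
  ext H
  simp only [Set.mem_setOf_eq, Set.mem_insert_iff, Set.mem_singleton_iff]
  constructor
  · rintro ⟨hA, hle⟩
    rw [arr_eq] at hA
    rcases hA with ⟨c, rfl⟩ | ⟨c, d, a', hcd, ha', rfl⟩
    · have hc : c = i ∨ c = j ∨ c = k := by
        by_contra hc
        push_neg at hc
        have h1 := mem_Pm.1 (hle (mem_inf2.2
          ⟨ev_mem_Hm hc.1 hc.2.1, ev_mem_Hm hc.1 hc.2.2⟩))
        simp [ev] at h1
      have h1 := mem_Pm.1 (hle hw)
      rcases hc with rfl | rfl | rfl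
      · simp [tv] at h1
      · simp [tv, hij.ne'] at h1
        exact absurd h1 (sgn_ne_zero ha)
      · simp [tv, hik.ne', hjk.ne'] at h1
        exact absurd h1 (sgn_ne_zero hb)
    · have hc : c = i ∨ c = j ∨ c = k := by
        by_contra hc
        push_neg at hc
        have h1 := mem_Hm.1 (hle (mem_inf2.2
          ⟨ev_mem_Hm hc.1 hc.2.1, ev_mem_Hm hc.1 hc.2.2⟩))
        simp [ev, hcd.ne'] at h1
      have hd : d = i ∨ d = j ∨ d = k := by
        by_contra hc
        push_neg at hc
        have h1 := mem_Hm.1 (hle (mem_inf2.2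
          ⟨ev_mem_Hm hc.1 hc.2.1, ev_mem_Hm hc.1 hc.2.2⟩))
        simp [ev, hcd.ne] at h1
        exact sgn_ne_zero ha' h1
      have h1 := mem_Hm.1 (hle hw)
      rcases hc with rfl | rfl | rfl <;> rcases hd with rfl | rfl | rfl
      · exact absurd hcd (lt_irrefl _)
      · -- (i,j)
        simp [tv, hij.ne, hij.ne'] at h1
        have : a' = a := by
          rcases ha with rfl | rfl <;> rcases ha' with rfl | rfl <;>
            norm_num at h1 <;> rfl
        exact Or.inl (by rw [this])
      · -- (i,k)
        simp [tv, hik.ne, hik.ne', hjk.ne'] at h1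
        have : a' = b := by
          rcases hb with rfl | rfl <;> rcases ha' with rfl | rfl <;>
            norm_num at h1 <;> rfl
        exact Or.inr (Or.inl (by rw [this]))
      · exact absurd (hcd.trans hij) (lt_irrefl _)
      · exact absurd hcd (lt_irrefl _)
      · -- (j,k)
        simp [tv, hij.ne', hik.ne', hjk.ne, hjk.ne'] at h1
        have : a' = -(a * b) := by
          rcases ha with rfl | rfl <;> rcases hb with rfl | rfl <;>
            rcases ha' with rfl | rfl <;> norm_num at h1 <;> norm_num
        exact Or.inr (Or.inr (by rw [this]))
      · exact absurd (hcd.trans hik) (lt_irrefl _)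
      · exact absurd (hcd.trans hjk) (lt_irrefl _)
      · exact absurd hcd (lt_irrefl _)
  · rintro (rfl | rfl | rfl)
    · exact ⟨mem_arr_H hij ha, inf_le_left⟩
    · exact ⟨mem_arr_H hik hb, inf_le_right⟩
    · exact ⟨mem_arr_H hjk (sgn_neg_mul ha hb), flatT_le3 hij.ne ha⟩

end TypeBAux

namespace TypeBAux

variable {n : ℕ}

lemma ncard2 {α : Type*} {a b : α} (h : a ≠ b) : ({a, b} : Set α).ncard = 2 :=
  Set.ncard_pair h

lemma ncard3 {α : Type*} {a b c : α} (h1 : a ≠ b) (h2 : a ≠ c) (h3 : b ≠ c) :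
    ({a, b, c} : Set α).ncard = 3 := by
  rw [Set.ncard_insert_of_notMem (by simp [h1, h2]), Set.ncard_pair h3]

lemma ncard4 {α : Type*} {a b c d : α} (h1 : a ≠ b) (h2 : a ≠ c) (h3 : a ≠ d)
    (h4 : b ≠ c) (h5 : b ≠ d) (h6 : c ≠ d) :
    ({a, b, c, d} : Set α).ncard = 4 := by
  rw [Set.ncard_insert_of_notMem (by simp [h1, h2, h3]),
    Set.ncard_insert_of_notMem (by simp [h4, h5]), Set.ncard_pair h6]

lemma multA {i j : Fin n} (hij : i < j) :
    flatMultiplicity (typeBArrangement n) (Pm i ⊓ Pm j) = 4 := by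
  rw [flatMultiplicity]
  rw [show {H ∈ typeBArrangement n | Pm i ⊓ Pm j ≤ H} =
      {Pm i, Pm j, Hm i j 1, Hm i j (-1)} from flatA_hyps hij]
  refine ncard4 (fun h => hij.ne (Pm_inj h))
    (Pm_ne_Hm hij.ne one_ne_zero) (Pm_ne_Hm hij.ne (by norm_num))
    (Pm_ne_Hm hij.ne one_ne_zero) (Pm_ne_Hm hij.ne (by norm_num)) ?_
  intro h
  have := (Hm_inj hij hij (Or.inl rfl) (Or.inr rfl) h).2.2
  norm_num at this

lemma multT {i j k : Fin n} (hij : i < j) (hjk : j < k)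
    {a b : ℂ} (ha : a = 1 ∨ a = -1) (hb : b = 1 ∨ b = -1) :
    flatMultiplicity (typeBArrangement n) (Hm i j a ⊓ Hm i k b) = 3 := by
  have hik : i < k := hij.trans hjk
  rw [flatMultiplicity]
  rw [show {H ∈ typeBArrangement n | Hm i j a ⊓ Hm i k b ≤ H} =
      {Hm i j a, Hm i k b, Hm j k (-(a * b))} from flatT_hyps hij hjk ha hb]
  refine ncard3 ?_ ?_ ?_
  · intro h
    exact hjk.ne ((Hm_inj hij hik ha hb h).2.1)
  · intro h
    exact hij.ne ((Hm_inj hij hjk ha (sgn_neg_mul ha hb) h).1)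
  · intro h
    exact hij.ne ((Hm_inj hik hjk hb (sgn_neg_mul ha hb) h).1)

lemma multC {i j k : Fin n} (hjk : j < k) (hij : i ≠ j) (hik : i ≠ k)
    {a : ℂ} (ha : a = 1 ∨ a = -1) :
    flatMultiplicity (typeBArrangement n) (Pm i ⊓ Hm j k a) = 2 := by
  rw [flatMultiplicity]
  rw [show {H ∈ typeBArrangement n | Pm i ⊓ Hm j k a ≤ H} =
      {Pm i, Hm j k a} from flatC_hyps hjk hij hik ha]
  exact ncard2 (Pm_ne_Hm hjk.ne (sgn_ne_zero ha))

lemma multD {i j k l : Fin n} (hij : i < j) (hkl : k < l) (hik : i < k)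
    (hjk : j ≠ k) (hjl : j ≠ l) {a b : ℂ}
    (ha : a = 1 ∨ a = -1) (hb : b = 1 ∨ b = -1) :
    flatMultiplicity (typeBArrangement n) (Hm i j a ⊓ Hm k l b) = 2 := by
  rw [flatMultiplicity]
  rw [show {H ∈ typeBArrangement n | Hm i j a ⊓ Hm k l b ≤ H} =
      {Hm i j a, Hm k l b} from flatD_hyps hij hkl hik hjk hjl ha hb]
  exact ncard2 (fun h => hik.ne ((Hm_inj hij hkl ha hb h).1))

/-! normalization lemmas -/

lemma normN1 {j k : Fin n} {a : ℂ} (ha : a ≠ 0) :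
    Pm j ⊓ Hm j k a = Pm j ⊓ Pm k := by
  ext x
  simp only [mem_inf2, mem_Pm, mem_Hm]
  constructor
  · rintro ⟨h1, h2⟩
    refine ⟨h1, ?_⟩
    rw [h1, zero_add] at h2
    exact (mul_eq_zero.1 h2).resolve_left ha
  · rintro ⟨h1, h2⟩
    exact ⟨h1, by rw [h1, h2]; ring⟩

lemma normN2 {j k : Fin n} {a : ℂ} (ha : a ≠ 0) :
    Pm k ⊓ Hm j k a = Pm j ⊓ Pm k := by
  ext x
  simp only [mem_inf2, mem_Pm, mem_Hm]
  constructor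
  · rintro ⟨h1, h2⟩
    rw [h1, mul_zero, add_zero] at h2
    exact ⟨h2, h1⟩
  · rintro ⟨h1, h2⟩
    exact ⟨h2, by rw [h1, h2]; ring⟩

lemma normN3 {i j : Fin n} {a b : ℂ} (hab : a ≠ b) :
    Hm i j a ⊓ Hm i j b = Pm i ⊓ Pm j := by
  ext x
  simp only [mem_inf2, mem_Pm, mem_Hm]
  constructor
  · rintro ⟨h1, h2⟩
    have hj : (a - b) * x j = 0 := by linear_combination h1 - h2
    have hxj : x j = 0 := (mul_eq_zero.1 hj).resolve_left (sub_ne_zero.2 hab)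
    exact ⟨by linear_combination h1 - a * hxj, hxj⟩
  · rintro ⟨h1, h2⟩
    constructor <;> rw [h1, h2] <;> ring

lemma normN4 {i j k : Fin n} {a b : ℂ} (ha : a ≠ 0) :
    Hm i j a ⊓ Hm j k b = Hm i j a ⊓ Hm i k (-(a * b)) := by
  ext x
  simp only [mem_inf2, mem_Hm]
  constructor
  · rintro ⟨h1, h2⟩
    exact ⟨h1, by linear_combination h1 - a * h2⟩
  · rintro ⟨h1, h2⟩
    refine ⟨h1, ?_⟩
    have h3 : a * (x j + b * x k) = 0 := by linear_combination h1 - h2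
    exact (mul_eq_zero.1 h3).resolve_left ha
  
lemma normN5 {i j k : Fin n} {a b : ℂ} (ha : a ≠ 0) (hb2 : b * b = 1) :
    Hm i j a ⊓ Hm k j b = Hm i j a ⊓ Hm i k (-(a * b)) := by
  have hb : b ≠ 0 := fun h => by rw [h, mul_zero] at hb2; norm_num at hb2
  ext x
  simp only [mem_inf2, mem_Hm]
  constructor
  · rintro ⟨h1, h2⟩
    exact ⟨h1, by linear_combination h1 - a * b * h2 + a * x j * hb2⟩
  · rintro ⟨h1, h2⟩
    refine ⟨h1, ?_⟩
    have h3 : (a * b) * (x k + b * x j) = 0 := by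
      linear_combination h1 - h2 + a * x j * hb2
    exact (mul_eq_zero.1 h3).resolve_left (mul_ne_zero ha hb)

end TypeBAux

namespace TypeBAux

variable {n : ℕ}

/-- normal forms for rank-two flats -/
def IsA (F : Submodule ℂ (Fin n → ℂ)) : Prop :=
  ∃ i j : Fin n, i < j ∧ F = Pm i ⊓ Pm j

def IsT (F : Submodule ℂ (Fin n → ℂ)) : Prop :=
  ∃ i j k : Fin n, ∃ a b : ℂ, i < j ∧ j < k ∧ (a = 1 ∨ a = -1) ∧
    (b = 1 ∨ b = -1) ∧ F = Hm i j a ⊓ Hm i k b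

def IsC (F : Submodule ℂ (Fin n → ℂ)) : Prop :=
  ∃ i j k : Fin n, ∃ a : ℂ, i ≠ j ∧ i ≠ k ∧ j < k ∧ (a = 1 ∨ a = -1) ∧
    F = Pm i ⊓ Hm j k a

def IsD (F : Submodule ℂ (Fin n → ℂ)) : Prop :=
  ∃ i j k l : Fin n, ∃ a b : ℂ, i < j ∧ k < l ∧ i < k ∧ j ≠ k ∧ j ≠ l ∧
    (a = 1 ∨ a = -1) ∧ (b = 1 ∨ b = -1) ∧ F = Hm i j a ⊓ Hm k l b

lemma classifyPH {F : Submodule ℂ (Fin n → ℂ)} (c d e : Fin n) (hde : d < e)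
    {a : ℂ} (ha : a = 1 ∨ a = -1) (hF : F = Pm c ⊓ Hm d e a) :
    IsA F ∨ IsC F := by
  rcases eq_or_ne c d with rfl | hcd
  · exact Or.inl ⟨c, e, hde, by rw [hF, normN1 (sgn_ne_zero ha)]⟩
  rcases eq_or_ne c e with rfl | hce
  · exact Or.inl ⟨d, c, hde, by rw [hF, normN2 (sgn_ne_zero ha)]⟩
  · exact Or.inr ⟨c, d, e, a, hcd, hce, hde, ha, hF⟩

lemma classifyHH {F : Submodule ℂ (Fin n → ℂ)} {c d e f : Fin n}
    (hcd : c < d) (hef : e < f) {a b : ℂ}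
    (ha : a = 1 ∨ a = -1) (hb : b = 1 ∨ b = -1)
    (hne : Hm c d a ≠ Hm e f b) (hF : F = Hm c d a ⊓ Hm e f b) :
    IsA F ∨ IsT F ∨ IsD F := by
  rcases eq_or_ne c e with rfl | hce
  · rcases eq_or_ne d f with rfl | hdf
    · -- same index pair, so a ≠ b
      have hab : a ≠ b := fun h => hne (by rw [h])
      exact Or.inl ⟨c, d, hcd, by rw [hF, normN3 hab]⟩
    · rcases lt_or_gt_of_ne hdf with h | h
      · exact Or.inr (Or.inl ⟨c, d, f, a, b, hcd, h, ha, hb, hF⟩)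
      · exact Or.inr (Or.inl ⟨c, f, d, b, a, hef, h, hb, ha, by rw [hF, inf_comm]⟩)
  rcases eq_or_ne d f with rfl | hdf
  · -- shared last index d
    rcases lt_or_gt_of_ne hce with h | h
    · -- c < e < d
      refine Or.inr (Or.inl ⟨c, e, d, -(a * b), a, h, hef, sgn_neg_mul ha hb, ha, ?_⟩)
      rw [hF, normN5 (sgn_ne_zero ha) (sgn_sq hb), inf_comm]
    · -- e < c < d
      refine Or.inr (Or.inl ⟨e, c, d, -(b * a), b, h, hcd, sgn_neg_mul hb ha, hb, ?_⟩)
      rw [hF, inf_comm, normN5 (sgn_ne_zero hb) (sgn_sq ha), inf_comm]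
  rcases eq_or_ne d e with rfl | hde
  · -- c < d < f
    refine Or.inr (Or.inl ⟨c, d, f, a, -(a * b), hcd, hef, ha, sgn_neg_mul ha hb, ?_⟩)
    rw [hF, normN4 (sgn_ne_zero ha)]
  rcases eq_or_ne c f with rfl | hcf
  · -- e < c < d
    refine Or.inr (Or.inl ⟨e, c, d, b, -(b * a), hef, hcd, hb, sgn_neg_mul hb ha, ?_⟩)
    rw [hF, inf_comm, normN4 (sgn_ne_zero hb)]
  · -- disjoint
    rcases lt_or_gt_of_ne hce with h | h
    · exact Or.inr (Or.inr ⟨c, d, e, f, a, b, hcd, hef, h, hde, hdf, ha, hb, hF⟩)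
    · exact Or.inr (Or.inr ⟨e, f, c, d, b, a, hef, hcd, h, hcf.symm,
        hdf.symm, hb, ha, by rw [hF, inf_comm]⟩)

lemma classify {F : Submodule ℂ (Fin n → ℂ)}
    (hF : F ∈ rankTwoFlats (typeBArrangement n)) :
    IsA F ∨ IsT F ∨ IsC F ∨ IsD F := by
  obtain ⟨H, hH, H', hH', hne, rfl⟩ := hF
  rw [arr_eq] at hH hH'
  rcases hH with ⟨c, rfl⟩ | ⟨c, d, a, hcd, ha, rfl⟩
  · rcases hH' with ⟨e, rfl⟩ | ⟨e, f, b, hef, hb, rfl⟩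
    · have hce : c ≠ e := fun h => hne (by rw [h])
      rcases lt_or_gt_of_ne hce with h | h
      · exact Or.inl ⟨c, e, h, rfl⟩
      · exact Or.inl ⟨e, c, h, by rw [inf_comm]⟩
    · rcases classifyPH c e f hef hb rfl with h | h
      · exact Or.inl h
      · exact Or.inr (Or.inr (Or.inl h))
  · rcases hH' with ⟨e, rfl⟩ | ⟨e, f, b, hef, hb, rfl⟩
    · rcases classifyPH e c d hcd ha (by rw [inf_comm]) with h | h
      · exact Or.inl h
      · exact Or.inr (Or.inr (Or.inl h))
    · rcases classifyHH hcd hef ha hb hne rfl with h | h | h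
      · exact Or.inl h
      · exact Or.inr (Or.inl h)
      · exact Or.inr (Or.inr (Or.inr h))

end TypeBAux

namespace TypeBAux

variable {n : ℕ}

lemma isA_mem_RT {F : Submodule ℂ (Fin n → ℂ)} (h : IsA F) :
    F ∈ rankTwoFlats (typeBArrangement n) ∧
      flatMultiplicity (typeBArrangement n) F = 4 := by
  obtain ⟨i, j, hij, rfl⟩ := h
  exact ⟨⟨Pm i, mem_arr_P i, Pm j, mem_arr_P j,
    fun h => hij.ne (Pm_inj h), rfl⟩, multA hij⟩

lemma isT_mem_RT {F : Submodule ℂ (Fin n → ℂ)} (h : IsT F) :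
    F ∈ rankTwoFlats (typeBArrangement n) ∧
      flatMultiplicity (typeBArrangement n) F = 3 := by
  obtain ⟨i, j, k, a, b, hij, hjk, ha, hb, rfl⟩ := h
  refine ⟨⟨Hm i j a, mem_arr_H hij ha, Hm i k b, mem_arr_H (hij.trans hjk) hb,
    fun h => hjk.ne ((Hm_inj hij (hij.trans hjk) ha hb h).2.1), rfl⟩,
    multT hij hjk ha hb⟩

lemma isC_mem_RT {F : Submodule ℂ (Fin n → ℂ)} (h : IsC F) :
    F ∈ rankTwoFlats (typeBArrangement n) ∧
      flatMultiplicity (typeBArrangement n) F = 2 := by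
  obtain ⟨i, j, k, a, hij, hik, hjk, ha, rfl⟩ := h
  exact ⟨⟨Pm i, mem_arr_P i, Hm j k a, mem_arr_H hjk ha,
    Pm_ne_Hm hjk.ne (sgn_ne_zero ha), rfl⟩, multC hjk hij hik ha⟩

lemma isD_mem_RT {F : Submodule ℂ (Fin n → ℂ)} (h : IsD F) :
    F ∈ rankTwoFlats (typeBArrangement n) ∧
      flatMultiplicity (typeBArrangement n) F = 2 := by
  obtain ⟨i, j, k, l, a, b, hij, hkl, hik, hjk, hjl, ha, hb, rfl⟩ := h
  exact ⟨⟨Hm i j a, mem_arr_H hij ha, Hm k l b, mem_arr_H hkl hb,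
    fun h => hik.ne ((Hm_inj hij hkl ha hb h).1), rfl⟩,
    multD hij hkl hik hjk hjl ha hb⟩

lemma S4_eq :
    {F ∈ rankTwoFlats (typeBArrangement n) |
        flatMultiplicity (typeBArrangement n) F = 4} = {F | IsA F} := by
  ext F
  constructor
  · rintro ⟨hRT, hm⟩
    rcases classify hRT with h | h | h | h
    · exact h
    · rw [(isT_mem_RT h).2] at hm; norm_num at hm
    · rw [(isC_mem_RT h).2] at hm; norm_num at hm
    · rw [(isD_mem_RT h).2] at hm; norm_num at hm
  · exact fun h => isA_mem_RT h

lemma S3_eq :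
    {F ∈ rankTwoFlats (typeBArrangement n) |
        flatMultiplicity (typeBArrangement n) F = 3} = {F | IsT F} := by
  ext F
  constructor
  · rintro ⟨hRT, hm⟩
    rcases classify hRT with h | h | h | h
    · rw [(isA_mem_RT h).2] at hm; norm_num at hm
    · exact h
    · rw [(isC_mem_RT h).2] at hm; norm_num at hm
    · rw [(isD_mem_RT h).2] at hm; norm_num at hm
  · exact fun h => isT_mem_RT h

lemma S2_eq :
    {F ∈ rankTwoFlats (typeBArrangement n) |
        flatMultiplicity (typeBArrangement n) F = 2} = {F | IsC F ∨ IsD F} := by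
  ext F
  constructor
  · rintro ⟨hRT, hm⟩
    rcases classify hRT with h | h | h | h
    · rw [(isA_mem_RT h).2] at hm; norm_num at hm
    · rw [(isT_mem_RT h).2] at hm; norm_num at hm
    · exact Or.inl h
    · exact Or.inr h
  · rintro (h | h)
    · exact isC_mem_RT h
    · exact isD_mem_RT h

end TypeBAux

namespace TypeBAux

variable {n : ℕ}

lemma wv_support {i j m : Fin n} {a : ℂ} (h : wv i j a m ≠ 0) :
    m = i ∨ m = j := by
  by_contra hc
  push_neg at hc
  exact h (by simp [wv, hc.1, hc.2])

lemma sgn_cancel {a a' : ℂ} (ha : a = 1 ∨ a = -1) (ha' : a' = 1 ∨ a' = -1)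
    (h : 1 + a' * -a = 0) : a' = a := by
  rcases ha with rfl | rfl <;> rcases ha' with rfl | rfl <;> norm_num at h <;> rfl

/-- injectivity for type A flats -/
lemma injA {i j i' j' : Fin n} (h1 : i < j) (h2 : i' < j')
    (heq : Pm i ⊓ Pm j = Pm i' ⊓ Pm j') : i = i' ∧ j = j' := by
  have hi' : i' = i ∨ i' = j := by
    by_contra hc
    push_neg at hc
    have hm : ev i' ∈ Pm i' ⊓ Pm j' := by
      rw [← heq]; exact mem_inf2.2 ⟨ev_mem_Pm hc.1, ev_mem_Pm hc.2⟩
    have h0 := mem_Pm.1 (mem_inf2.1 hm).1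
    simp [ev] at h0
  have hj' : j' = i ∨ j' = j := by
    by_contra hc
    push_neg at hc
    have hm : ev j' ∈ Pm i' ⊓ Pm j' := by
      rw [← heq]; exact mem_inf2.2 ⟨ev_mem_Pm hc.1, ev_mem_Pm hc.2⟩
    have h0 := mem_Pm.1 (mem_inf2.1 hm).2
    simp [ev] at h0
  rcases hi' with rfl | rfl
  · rcases hj' with rfl | rfl
    · exact absurd h2 (lt_irrefl _)
    · exact ⟨rfl, rfl⟩
  · rcases hj' with rfl | rfl
    · exact absurd (h1.trans h2) (lt_irrefl _)
    · exact absurd h2 (lt_irrefl _)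

/-- ev vectors not in type-T flats -/
lemma T_notin {i j k : Fin n} (hij : i ≠ j) (hik : i ≠ k) {a b : ℂ}
    (ha : a ≠ 0) (hb : b ≠ 0) {m : Fin n}
    (hm : ev m ∈ Hm i j a ⊓ Hm i k b) : m ≠ i ∧ m ≠ j ∧ m ≠ k := by
  obtain ⟨hm1, hm2⟩ := mem_inf2.1 hm
  rw [mem_Hm] at hm1 hm2
  refine ⟨fun h => ?_, fun h => ?_, fun h => ?_⟩
  · rw [h, ev_self, ev_ne hij.symm] at hm1
    norm_num at hm1
  · rw [h, ev_self, ev_ne hij] at hm1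
    simp at hm1
    exact ha hm1
  · rw [h, ev_self, ev_ne hik] at hm2
    simp at hm2
    exact hb hm2

lemma injT {i j k i' j' k' : Fin n} {a b a' b' : ℂ}
    (hij : i < j) (hjk : j < k) (hij' : i' < j') (hjk' : j' < k')
    (ha : a = 1 ∨ a = -1) (hb : b = 1 ∨ b = -1)
    (ha' : a' = 1 ∨ a' = -1) (hb' : b' = 1 ∨ b' = -1)
    (heq : Hm i j a ⊓ Hm i k b = Hm i' j' a' ⊓ Hm i' k' b') :
    i = i' ∧ j = j' ∧ k = k' ∧ a = a' ∧ b = b' := by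
  have hik : i < k := hij.trans hjk
  have hik' : i' < k' := hij'.trans hjk'
  have Hin : ∀ m : Fin n, m ≠ i → m ≠ j → m ≠ k → ev m ∈ Hm i j a ⊓ Hm i k b :=
    fun m m1 m2 m3 => mem_inf2.2 ⟨ev_mem_Hm m1 m2, ev_mem_Hm m1 m3⟩
  have Hin' : ∀ m : Fin n, m ≠ i' → m ≠ j' → m ≠ k' →
      ev m ∈ Hm i' j' a' ⊓ Hm i' k' b' :=
    fun m m1 m2 m3 => mem_inf2.2 ⟨ev_mem_Hm m1 m2, ev_mem_Hm m1 m3⟩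
  have sub1 : ∀ m : Fin n, (m = i ∨ m = j ∨ m = k) → (m = i' ∨ m = j' ∨ m = k') := by
    intro m hm
    by_contra hc
    push_neg at hc
    have hD := T_notin hij.ne hik.ne (sgn_ne_zero ha) (sgn_ne_zero hb)
      (heq ▸ Hin' m hc.1 hc.2.1 hc.2.2)
    rcases hm with h | h | h
    exacts [hD.1 h, hD.2.1 h, hD.2.2 h]
  have sub2 : ∀ m : Fin n, (m = i' ∨ m = j' ∨ m = k') → (m = i ∨ m = j ∨ m = k) := by
    intro m hm
    by_contra hc
    push_neg at hc
    have hD := T_notin hij'.ne hik'.ne (sgn_ne_zero ha') (sgn_ne_zero hb')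
      (heq.symm ▸ Hin m hc.1 hc.2.1 hc.2.2)
    rcases hm with h | h | h
    exacts [hD.1 h, hD.2.1 h, hD.2.2 h]
  have hii : i = i' := by
    have l1 : i' ≤ i := by
      rcases sub1 i (Or.inl rfl) with h | h | h
      · exact h.ge
      · exact hij'.le.trans h.ge
      · exact hik'.le.trans h.ge
    have l2 : i ≤ i' := by
      rcases sub2 i' (Or.inl rfl) with h | h | h
      · exact h.ge
      · exact hij.le.trans h.ge
      · exact hik.le.trans h.ge
    exact le_antisymm l2 l1
  have hjj : j = j' := by
    have l1 : j' ≤ j := by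
      rcases sub1 j (Or.inr (Or.inl rfl)) with h | h | h
      · exact absurd (h.trans hii.symm) hij.ne'
      · exact h.ge
      · exact hjk'.le.trans h.ge
    have l2 : j ≤ j' := by
      rcases sub2 j' (Or.inr (Or.inl rfl)) with h | h | h
      · exact absurd (h.trans hii) hij'.ne'
      · exact h.ge
      · exact hjk.le.trans h.ge
    exact le_antisymm l2 l1
  have hkk : k = k' := by
    rcases sub1 k (Or.inr (Or.inr rfl)) with h | h | h
    · exact absurd (h.trans hii.symm) hik.ne'
    · exact absurd (h.trans hjj.symm) hjk.ne'
    · exact h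
  have hw : tv i j k a b ∈ Hm i' j' a' ⊓ Hm i' k' b' := by
    rw [← heq]
    exact mem_inf2.2 ⟨tv_mem_Hm1 hij.ne' (sgn_sq ha),
      tv_mem_Hm2 hik.ne' hjk.ne' (sgn_sq hb)⟩
  obtain ⟨hw1, hw2⟩ := mem_inf2.1 hw
  rw [mem_Hm] at hw1 hw2
  have t1 : tv i j k a b i = 1 := by simp [tv]
  have t2 : tv i j k a b j = -a := by simp [tv, hij.ne']
  have t3 : tv i j k a b k = -b := by simp [tv, hik.ne', hjk.ne']
  rw [← hii, ← hjj, t1, t2] at hw1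
  rw [← hii, ← hkk, t1, t3] at hw2
  exact ⟨hii, hjj, hkk, (sgn_cancel ha ha' hw1).symm, (sgn_cancel hb hb' hw2).symm⟩

/-- ev vectors not in type-C flats -/
lemma C_notin {i j k : Fin n} (hjk : j ≠ k) {a : ℂ} (ha : a ≠ 0) {m : Fin n}
    (hm : ev m ∈ Pm i ⊓ Hm j k a) : m ≠ i ∧ m ≠ j ∧ m ≠ k := by
  obtain ⟨hm1, hm2⟩ := mem_inf2.1 hm
  rw [mem_Pm] at hm1
  rw [mem_Hm] at hm2
  refine ⟨fun h => ?_, fun h => ?_, fun h => ?_⟩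
  · rw [h, ev_self] at hm1
    norm_num at hm1
  · rw [h, ev_self, ev_ne hjk.symm] at hm2
    norm_num at hm2
  · rw [h, ev_self, ev_ne hjk] at hm2
    simp at hm2
    exact ha hm2

lemma injC {i j k i' j' k' : Fin n} {a a' : ℂ}
    (hij : i ≠ j) (hik : i ≠ k) (hjk : j < k)
    (hij' : i' ≠ j') (hik' : i' ≠ k') (hjk' : j' < k')
    (ha : a = 1 ∨ a = -1) (ha' : a' = 1 ∨ a' = -1)
    (heq : Pm i ⊓ Hm j k a = Pm i' ⊓ Hm j' k' a') :
    i = i' ∧ j = j' ∧ k = k' ∧ a = a' := by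
  have hu : wv j k a ∈ Pm i' ⊓ Hm j' k' a' := by
    rw [← heq]
    exact mem_inf2.2 ⟨wv_mem_Pm hij hik, wv_mem_Hm hjk.ne (sgn_sq ha)⟩
  obtain ⟨hw1, hw2⟩ := mem_inf2.1 hu
  rw [mem_Pm] at hw1
  rw [mem_Hm] at hw2
  have wj : wv j k a j = 1 := by simp [wv]
  have wk : wv j k a k = -a := by simp [wv, hjk.ne']
  have mem' : ∀ m : Fin n, m ≠ i → m ≠ j → m ≠ k → ev m ∈ Pm i' ⊓ Hm j' k' a' :=
    fun m m1 m2 m3 => heq ▸ mem_inf2.2 ⟨ev_mem_Pm m1, ev_mem_Hm m2 m3⟩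
  have sub2 : ∀ m : Fin n, (m = i' ∨ m = j' ∨ m = k') → (m = i ∨ m = j ∨ m = k) := by
    intro m hm
    by_contra hc
    push_neg at hc
    have hD := C_notin hjk'.ne (sgn_ne_zero ha') (mem' m hc.1 hc.2.1 hc.2.2)
    rcases hm with h | h | h
    exacts [hD.1 h, hD.2.1 h, hD.2.2 h]
  have e1 : i' = i := by
    rcases sub2 i' (Or.inl rfl) with h | h | h
    · exact h
    · exfalso; rw [h, wj] at hw1; norm_num at hw1
    · exfalso; rw [h, wk] at hw1; exact sgn_ne_zero ha (neg_eq_zero.1 hw1)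
  have e2 : j' = j := by
    rcases sub2 j' (Or.inr (Or.inl rfl)) with h | h | h
    · exact absurd (h.trans e1.symm).symm hij'
    · exact h
    · exfalso
      rcases sub2 k' (Or.inr (Or.inr rfl)) with h2 | h2 | h2
      · exact hik' (h2.trans e1.symm).symm
      · rw [h, h2] at hjk'
        exact absurd (hjk'.trans hjk) (lt_irrefl _)
      · rw [h, h2] at hjk'
        exact absurd hjk' (lt_irrefl _)
  have e3 : k' = k := by
    rcases sub2 k' (Or.inr (Or.inr rfl)) with h | h | h
    · exact absurd (h.trans e1.symm).symm hik'
    · exfalso; rw [h, e2] at hjk'; exact absurd hjk' (lt_irrefl _)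
    · exact h
  refine ⟨e1.symm, e2.symm, e3.symm, ?_⟩
  rw [e2, e3, wj, wk] at hw2
  exact (sgn_cancel ha ha' hw2).symm

/-- ev vectors not in type-D flats -/
lemma D_notin {i j k l : Fin n} (hij : i ≠ j) (hkl : k ≠ l) {a b : ℂ}
    (ha : a ≠ 0) (hb : b ≠ 0) {m : Fin n}
    (hm : ev m ∈ Hm i j a ⊓ Hm k l b) : m ≠ i ∧ m ≠ j ∧ m ≠ k ∧ m ≠ l := by
  obtain ⟨hm1, hm2⟩ := mem_inf2.1 hm
  rw [mem_Hm] at hm1 hm2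
  refine ⟨fun h => ?_, fun h => ?_, fun h => ?_, fun h => ?_⟩
  · rw [h, ev_self, ev_ne hij.symm] at hm1
    norm_num at hm1
  · rw [h, ev_self, ev_ne hij] at hm1
    simp at hm1
    exact ha hm1
  · rw [h, ev_self, ev_ne hkl.symm] at hm2
    norm_num at hm2
  · rw [h, ev_self, ev_ne hkl] at hm2
    simp at hm2
    exact hb hm2

lemma injD {i j k l i' j' k' l' : Fin n} {a b a' b' : ℂ}
    (hij : i < j) (hkl : k < l) (hik : i < k) (hjk : j ≠ k) (hjl : j ≠ l)
    (hij' : i' < j') (hkl' : k' < l') (hik' : i' < k') (hjk' : j' ≠ k') (hjl' : j' ≠ l')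
    (ha : a = 1 ∨ a = -1) (hb : b = 1 ∨ b = -1)
    (ha' : a' = 1 ∨ a' = -1) (hb' : b' = 1 ∨ b' = -1)
    (heq : Hm i j a ⊓ Hm k l b = Hm i' j' a' ⊓ Hm k' l' b') :
    i = i' ∧ j = j' ∧ k = k' ∧ l = l' ∧ a = a' ∧ b = b' := by
  have hil : i < l := hik.trans hkl
  have hu : wv i j a ∈ Hm i' j' a' ⊓ Hm k' l' b' := by
    rw [← heq]
    exact mem_inf2.2 ⟨wv_mem_Hm hij.ne (sgn_sq ha),
      wv_mem_Hm' hik.ne' hjk.symm hil.ne' hjl.symm⟩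
  have hv : wv k l b ∈ Hm i' j' a' ⊓ Hm k' l' b' := by
    rw [← heq]
    exact mem_inf2.2 ⟨wv_mem_Hm' hik.ne hil.ne hjk hjl,
      wv_mem_Hm hkl.ne (sgn_sq hb)⟩
  obtain ⟨hu1, hu2⟩ := mem_inf2.1 hu
  obtain ⟨hv1, hv2⟩ := mem_inf2.1 hv
  rw [mem_Hm] at hu1 hu2 hv1 hv2
  have ui : wv i j a i = 1 := by simp [wv]
  have uj : wv i j a j = -a := by simp [wv, hij.ne']
  have vk : wv k l b k = 1 := by simp [wv]
  have vl : wv k l b l = -b := by simp [wv, hkl.ne']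
  have mem' : ∀ m : Fin n, m ≠ i → m ≠ j → m ≠ k → m ≠ l →
      ev m ∈ Hm i' j' a' ⊓ Hm k' l' b' :=
    fun m m1 m2 m3 m4 => heq ▸ mem_inf2.2 ⟨ev_mem_Hm m1 m2, ev_mem_Hm m3 m4⟩
  have sub2 : ∀ m : Fin n, (m = i' ∨ m = j' ∨ m = k' ∨ m = l') →
      (m = i ∨ m = j ∨ m = k ∨ m = l) := by
    intro m hm
    by_contra hc
    push_neg at hc
    have hD := D_notin hij'.ne hkl'.ne (sgn_ne_zero ha') (sgn_ne_zero hb')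
      (mem' m hc.1 hc.2.1 hc.2.2.1 hc.2.2.2)
    rcases hm with h | h | h | h
    exacts [hD.1 h, hD.2.1 h, hD.2.2.1 h, hD.2.2.2 h]
  -- step 1 : i' = i, j' = j, a' = a
  obtain ⟨e1, e2, e3⟩ : i' = i ∧ j' = j ∧ a' = a := by
    rcases sub2 i' (Or.inl rfl) with h1 | h1 | h1 | h1
    · -- i' = i
      rw [h1, ui] at hu1
      have hj0 : wv i j a j' ≠ 0 := by
        intro h0
        rw [h0, mul_zero, add_zero] at hu1
        norm_num at hu1
      rcases wv_support hj0 with h2 | h2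
      · exact absurd (h2.trans h1.symm) hij'.ne'
      · rw [h2, uj] at hu1
        exact ⟨h1, h2, sgn_cancel ha ha' hu1⟩
    · -- i' = j : contradiction
      exfalso
      rw [h1, uj] at hu1
      have hj0 : wv i j a j' ≠ 0 := by
        intro h0
        rw [h0, mul_zero, add_zero, neg_eq_zero] at hu1
        exact sgn_ne_zero ha hu1
      rcases wv_support hj0 with h2 | h2
      · rw [h1, h2] at hij'
        exact absurd (hij.trans hij') (lt_irrefl _)
      · rw [h1, h2] at hij'
        exact absurd hij' (lt_irrefl _)
    · -- i' = k : contradiction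
      exfalso
      rw [h1, vk] at hv1
      have hj0 : wv k l b j' ≠ 0 := by
        intro h0
        rw [h0, mul_zero, add_zero] at hv1
        norm_num at hv1
      rcases wv_support hj0 with h2 | h2
      · rw [h1, h2] at hij'
        exact absurd hij' (lt_irrefl _)
      · -- (i',j') = (k,l) ; examine k'
        rcases sub2 k' (Or.inr (Or.inr (Or.inl rfl))) with h3 | h3 | h3 | h3
        · rw [h1, h3] at hik'
          exact absurd (hik.trans hik') (lt_irrefl _)
        · -- k' = j
          rw [h3, uj] at hu2
          have hl0 : wv i j a l' ≠ 0 := by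
            intro h0
            rw [h0, mul_zero, add_zero, neg_eq_zero] at hu2
            exact sgn_ne_zero ha hu2
          rcases wv_support hl0 with h4 | h4
          · rw [h3, h4] at hkl'
            exact absurd (hij.trans hkl') (lt_irrefl _)
          · rw [h3, h4] at hkl'
            exact absurd hkl' (lt_irrefl _)
        · rw [h1, h3] at hik'
          exact absurd hik' (lt_irrefl _)
        · exact hjk' (h2.trans h3.symm)
    · -- i' = l : contradiction
      exfalso
      rw [h1, vl] at hv1
      have hj0 : wv k l b j' ≠ 0 := by
        intro h0
        rw [h0, mul_zero, add_zero, neg_eq_zero] at hv1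
        exact sgn_ne_zero hb hv1
      rcases wv_support hj0 with h2 | h2
      · rw [h1, h2] at hij'
        exact absurd (hkl.trans hij') (lt_irrefl _)
      · rw [h1, h2] at hij'
        exact absurd hij' (lt_irrefl _)
  -- step 2 : k' = k, l' = l, b' = b
  obtain ⟨f1, f2, f3⟩ : k' = k ∧ l' = l ∧ b' = b := by
    rcases sub2 k' (Or.inr (Or.inr (Or.inl rfl))) with h1 | h1 | h1 | h1
    · exfalso
      rw [e1, h1] at hik'
      exact absurd hik' (lt_irrefl _)
    · -- k' = j
      exfalso
      rw [h1, uj] at hu2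
      have hl0 : wv i j a l' ≠ 0 := by
        intro h0
        rw [h0, mul_zero, add_zero, neg_eq_zero] at hu2
        exact sgn_ne_zero ha hu2
      rcases wv_support hl0 with h2 | h2
      · rw [h1, h2] at hkl'
        exact absurd (hij.trans hkl') (lt_irrefl _)
      · rw [h1, h2] at hkl'
        exact absurd hkl' (lt_irrefl _)
    · -- k' = k
      rw [h1, vk] at hv2
      have hl0 : wv k l b l' ≠ 0 := by
        intro h0
        rw [h0, mul_zero, add_zero] at hv2
        norm_num at hv2
      rcases wv_support hl0 with h2 | h2
      · exfalso
        rw [h1, h2] at hkl'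
        exact absurd hkl' (lt_irrefl _)
      · rw [h2, vl] at hv2
        exact ⟨h1, h2, sgn_cancel hb hb' hv2⟩
    · -- k' = l
      exfalso
      rw [h1, vl] at hv2
      have hl0 : wv k l b l' ≠ 0 := by
        intro h0
        rw [h0, mul_zero, add_zero, neg_eq_zero] at hv2
        exact sgn_ne_zero hb hv2
      rcases wv_support hl0 with h2 | h2
      · rw [h1, h2] at hkl'
        exact absurd (hkl.trans hkl') (lt_irrefl _)
      · rw [h1, h2] at hkl'
        exact absurd hkl' (lt_irrefl _)
  exact ⟨e1.symm, e2.symm, f1.symm, f2.symm, e3.symm, f3.symm⟩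

end TypeBAux

namespace TypeBAux

variable {n : ℕ}

open Finset

lemma exists_sorted2 {s : Finset (Fin n)} (hs : s.card = 2) :
    ∃ a b : Fin n, a < b ∧ s = {a, b} := by
  obtain ⟨a, b, hab, rfl⟩ := Finset.card_eq_two.1 hs
  rcases lt_or_gt_of_ne hab with h | h
  · exact ⟨a, b, h, rfl⟩
  · exact ⟨b, a, h, Finset.pair_comm a b⟩

lemma exists_sorted3 {s : Finset (Fin n)} (hs : s.card = 3) :
    ∃ a b c : Fin n, a < b ∧ b < c ∧ s = {a, b, c} := by
  set f := s.orderEmbOfFin hs with hf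
  have h01 : f 0 < f 1 := f.strictMono (by decide)
  have h12 : f 1 < f 2 := f.strictMono (by decide)
  refine ⟨f 0, f 1, f 2, h01, h12, ?_⟩
  have hsub : ({f 0, f 1, f 2} : Finset (Fin n)) ⊆ s := by
    intro x hx
    simp only [Finset.mem_insert, Finset.mem_singleton] at hx
    rcases hx with rfl | rfl | rfl <;> exact s.orderEmbOfFin_mem hs _
  have hcard : ({f 0, f 1, f 2} : Finset (Fin n)).card = 3 := by
    rw [Finset.card_insert_of_notMem (by simp [h01.ne, (h01.trans h12).ne]),
      Finset.card_pair h12.ne]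
  exact (Finset.eq_of_subset_of_card_le hsub (by rw [hs, hcard])).symm

lemma exists_sorted4 {s : Finset (Fin n)} (hs : s.card = 4) :
    ∃ a b c d : Fin n, a < b ∧ b < c ∧ c < d ∧ s = {a, b, c, d} := by
  set f := s.orderEmbOfFin hs with hf
  have h01 : f 0 < f 1 := f.strictMono (by decide)
  have h12 : f 1 < f 2 := f.strictMono (by decide)
  have h23 : f 2 < f 3 := f.strictMono (by decide)
  refine ⟨f 0, f 1, f 2, f 3, h01, h12, h23, ?_⟩
  have hsub : ({f 0, f 1, f 2, f 3} : Finset (Fin n)) ⊆ s := by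
    intro x hx
    simp only [Finset.mem_insert, Finset.mem_singleton] at hx
    rcases hx with rfl | rfl | rfl | rfl <;> exact s.orderEmbOfFin_mem hs _
  have hcard : ({f 0, f 1, f 2, f 3} : Finset (Fin n)).card = 4 := by
    rw [Finset.card_insert_of_notMem
        (by simp [h01.ne, (h01.trans h12).ne, ((h01.trans h12).trans h23).ne]),
      Finset.card_insert_of_notMem (by simp [h12.ne, (h12.trans h23).ne]),
      Finset.card_pair h23.ne]
  exact (Finset.eq_of_subset_of_card_le hsub (by rw [hs, hcard])).symm

lemma pair_ext {i j i' j' : Fin n} (h1 : i < j) (h2 : i' < j')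
    (h : ({i, j} : Finset (Fin n)) = {i', j'}) : i = i' ∧ j = j' := by
  have hi : i = i' ∨ i = j' := by
    have : i ∈ ({i', j'} : Finset (Fin n)) := h ▸ (by simp)
    simpa using this
  have hj : j = i' ∨ j = j' := by
    have : j ∈ ({i', j'} : Finset (Fin n)) := h ▸ (by simp)
    simpa using this
  rcases hi with h3 | h3
  · refine ⟨h3, ?_⟩
    rcases hj with h4 | h4
    · rw [h3] at h1; rw [h4] at h1; exact absurd h1 (lt_irrefl _)
    · exact h4
  · exfalso
    rcases hj with h4 | h4
    · rw [h3, h4] at h1; exact absurd (h1.trans h2) (lt_irrefl _)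
    · rw [h3, h4] at h1; exact absurd h1 (lt_irrefl _)

lemma card_sorted2 :
    ((Finset.univ : Finset (Fin n × Fin n)).filter fun p => p.1 < p.2).card
      = n.choose 2 := by
  rw [show n.choose 2 = ((Finset.univ : Finset (Fin n)).powersetCard 2).card by
    rw [Finset.card_powersetCard, Finset.card_univ, Fintype.card_fin]]
  apply Finset.card_bij (fun p _ => ({p.1, p.2} : Finset (Fin n)))
  · intro p hp
    rw [Finset.mem_filter] at hp
    rw [Finset.mem_powersetCard]
    exact ⟨Finset.subset_univ _, Finset.card_pair hp.2.ne⟩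
  · intro p hp q hq h
    rw [Finset.mem_filter] at hp hq
    obtain ⟨e1, e2⟩ := pair_ext hp.2 hq.2 h
    exact Prod.ext e1 e2
  · intro s hs
    rw [Finset.mem_powersetCard] at hs
    obtain ⟨a, b, hab, rfl⟩ := exists_sorted2 hs.2
    exact ⟨(a, b), Finset.mem_filter.2 ⟨Finset.mem_univ _, hab⟩, rfl⟩

lemma triple_ext {i j k i' j' k' : Fin n} (h1 : i < j) (h2 : j < k)
    (h1' : i' < j') (h2' : j' < k')
    (h : ({i, j, k} : Finset (Fin n)) = {i', j', k'}) :
    i = i' ∧ j = j' ∧ k = k' := by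
  have mm : ∀ m : Fin n, m ∈ ({i, j, k} : Finset (Fin n)) ↔
      m ∈ ({i', j', k'} : Finset (Fin n)) := fun m => by rw [h]
  have mi : i = i' ∨ i = j' ∨ i = k' := by simpa using (mm i).1 (by simp)
  have mj : j = i' ∨ j = j' ∨ j = k' := by simpa using (mm j).1 (by simp)
  have mk : k = i' ∨ k = j' ∨ k = k' := by simpa using (mm k).1 (by simp)
  have mi' : i' = i ∨ i' = j ∨ i' = k := by simpa using (mm i').2 (by simp)
  have mj' : j' = i ∨ j' = j ∨ j' = k := by simpa using (mm j').2 (by simp)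
  have mk' : k' = i ∨ k' = j ∨ k' = k := by simpa using (mm k').2 (by simp)
  have e1 : i = i' := by
    have l1 : i' ≤ i := by
      rcases mi with h3 | h3 | h3
      · exact h3.ge
      · exact h1'.le.trans h3.ge
      · exact (h1'.trans h2').le.trans h3.ge
    have l2 : i ≤ i' := by
      rcases mi' with h3 | h3 | h3
      · exact h3.ge
      · exact h1.le.trans h3.ge
      · exact (h1.trans h2).le.trans h3.ge
    exact le_antisymm l2 l1
  have e2 : j = j' := by
    have l1 : j' ≤ j := by
      rcases mj with h3 | h3 | h3
      · exact absurd (h3.trans e1.symm) h1.ne'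
      · exact h3.ge
      · exact h2'.le.trans h3.ge
    have l2 : j ≤ j' := by
      rcases mj' with h3 | h3 | h3
      · exact absurd (h3.trans e1) h1'.ne'
      · exact h3.ge
      · exact h2.le.trans h3.ge
    exact le_antisymm l2 l1
  refine ⟨e1, e2, ?_⟩
  rcases mk with h3 | h3 | h3
  · exact absurd (h3.trans e1.symm) ((h1.trans h2).ne')
  · exact absurd (h3.trans e2.symm) (h2.ne')
  · exact h3

lemma card_sorted3 :
    ((Finset.univ : Finset (Fin n × Fin n × Fin n)).filter
      fun p => p.1 < p.2.1 ∧ p.2.1 < p.2.2).card = n.choose 3 := by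
  rw [show n.choose 3 = ((Finset.univ : Finset (Fin n)).powersetCard 3).card by
    rw [Finset.card_powersetCard, Finset.card_univ, Fintype.card_fin]]
  apply Finset.card_bij (fun p _ => ({p.1, p.2.1, p.2.2} : Finset (Fin n)))
  · intro p hp
    rw [Finset.mem_filter] at hp
    rw [Finset.mem_powersetCard]
    refine ⟨Finset.subset_univ _, ?_⟩
    rw [Finset.card_insert_of_notMem
        (by simp [hp.2.1.ne, (hp.2.1.trans hp.2.2).ne]),
      Finset.card_pair hp.2.2.ne]
  · intro p hp q hq h
    rw [Finset.mem_filter] at hp hq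
    obtain ⟨e1, e2, e3⟩ := triple_ext hp.2.1 hp.2.2 hq.2.1 hq.2.2 h
    exact Prod.ext e1 (Prod.ext e2 e3)
  · intro s hs
    rw [Finset.mem_powersetCard] at hs
    obtain ⟨a, b, c, hab, hbc, rfl⟩ := exists_sorted3 hs.2
    exact ⟨(a, b, c), Finset.mem_filter.2 ⟨Finset.mem_univ _, hab, hbc⟩, rfl⟩

lemma quad_ext {i j k l i' j' k' l' : Fin n}
    (h1 : i < j) (h2 : j < k) (h3 : k < l)
    (h1' : i' < j') (h2' : j' < k') (h3' : k' < l')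
    (h : ({i, j, k, l} : Finset (Fin n)) = {i', j', k', l'}) :
    i = i' ∧ j = j' ∧ k = k' ∧ l = l' := by
  have mm : ∀ m : Fin n, m ∈ ({i, j, k, l} : Finset (Fin n)) ↔
      m ∈ ({i', j', k', l'} : Finset (Fin n)) := fun m => by rw [h]
  have mi : i = i' ∨ i = j' ∨ i = k' ∨ i = l' := by simpa using (mm i).1 (by simp)
  have mj : j = i' ∨ j = j' ∨ j = k' ∨ j = l' := by simpa using (mm j).1 (by simp)
  have mk : k = i' ∨ k = j' ∨ k = k' ∨ k = l' := by simpa using (mm k).1 (by simp)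
  have ml : l = i' ∨ l = j' ∨ l = k' ∨ l = l' := by simpa using (mm l).1 (by simp)
  have mi' : i' = i ∨ i' = j ∨ i' = k ∨ i' = l := by simpa using (mm i').2 (by simp)
  have mj' : j' = i ∨ j' = j ∨ j' = k ∨ j' = l := by simpa using (mm j').2 (by simp)
  have mk' : k' = i ∨ k' = j ∨ k' = k ∨ k' = l := by simpa using (mm k').2 (by simp)
  have e1 : i = i' := by
    have l1 : i' ≤ i := by
      rcases mi with h4 | h4 | h4 | h4
      · exact h4.ge
      · exact h1'.le.trans h4.ge
      · exact (h1'.trans h2').le.trans h4.ge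
      · exact ((h1'.trans h2').trans h3').le.trans h4.ge
    have l2 : i ≤ i' := by
      rcases mi' with h4 | h4 | h4 | h4
      · exact h4.ge
      · exact h1.le.trans h4.ge
      · exact (h1.trans h2).le.trans h4.ge
      · exact ((h1.trans h2).trans h3).le.trans h4.ge
    exact le_antisymm l2 l1
  have e2 : j = j' := by
    have l1 : j' ≤ j := by
      rcases mj with h4 | h4 | h4 | h4
      · exact absurd (h4.trans e1.symm) h1.ne'
      · exact h4.ge
      · exact h2'.le.trans h4.ge
      · exact (h2'.trans h3').le.trans h4.ge
    have l2 : j ≤ j' := by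
      rcases mj' with h4 | h4 | h4 | h4
      · exact absurd (h4.trans e1) h1'.ne'
      · exact h4.ge
      · exact h2.le.trans h4.ge
      · exact (h2.trans h3).le.trans h4.ge
    exact le_antisymm l2 l1
  have e3 : k = k' := by
    have l1 : k' ≤ k := by
      rcases mk with h4 | h4 | h4 | h4
      · exact absurd (h4.trans e1.symm) (h1.trans h2).ne'
      · exact absurd (h4.trans e2.symm) h2.ne'
      · exact h4.ge
      · exact h3'.le.trans h4.ge
    have l2 : k ≤ k' := by
      rcases mk' with h4 | h4 | h4 | h4
      · exact absurd (h4.trans e1) (h1'.trans h2').ne'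
      · exact absurd (h4.trans e2) h2'.ne'
      · exact h4.ge
      · exact h3.le.trans h4.ge
    exact le_antisymm l2 l1
  refine ⟨e1, e2, e3, ?_⟩
  rcases ml with h4 | h4 | h4 | h4
  · exact absurd (h4.trans e1.symm) ((h1.trans h2).trans h3).ne'
  · exact absurd (h4.trans e2.symm) (h2.trans h3).ne'
  · exact absurd (h4.trans e3.symm) h3.ne'
  · exact h4

lemma card_sorted4 :
    ((Finset.univ : Finset (Fin n × Fin n × Fin n × Fin n)).filter
      fun p => p.1 < p.2.1 ∧ p.2.1 < p.2.2.1 ∧ p.2.2.1 < p.2.2.2).card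
      = n.choose 4 := by
  rw [show n.choose 4 = ((Finset.univ : Finset (Fin n)).powersetCard 4).card by
    rw [Finset.card_powersetCard, Finset.card_univ, Fintype.card_fin]]
  apply Finset.card_bij (fun p _ => ({p.1, p.2.1, p.2.2.1, p.2.2.2} : Finset (Fin n)))
  · intro p hp
    rw [Finset.mem_filter] at hp
    obtain ⟨-, q1, q2, q3⟩ := hp
    rw [Finset.mem_powersetCard]
    refine ⟨Finset.subset_univ _, ?_⟩
    rw [Finset.card_insert_of_notMem
        (by simp [q1.ne, (q1.trans q2).ne, ((q1.trans q2).trans q3).ne]),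
      Finset.card_insert_of_notMem (by simp [q2.ne, (q2.trans q3).ne]),
      Finset.card_pair q3.ne]
  · intro p hp q hq h
    rw [Finset.mem_filter] at hp hq
    obtain ⟨e1, e2, e3, e4⟩ :=
      quad_ext hp.2.1 hp.2.2.1 hp.2.2.2 hq.2.1 hq.2.2.1 hq.2.2.2 h
    exact Prod.ext e1 (Prod.ext e2 (Prod.ext e3 e4))
  · intro s hs
    rw [Finset.mem_powersetCard] at hs
    obtain ⟨a, b, c, d, hab, hbc, hcd, rfl⟩ := exists_sorted4 hs.2
    exact ⟨(a, b, c, d), Finset.mem_filter.2 ⟨Finset.mem_univ _, hab, hbc, hcd⟩, rfl⟩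

end TypeBAux

namespace TypeBAux

variable {n : ℕ}

open Finset

def ICset (n : ℕ) : Finset (Fin n × Fin n × Fin n) :=
  Finset.univ.filter fun p => p.1 ≠ p.2.1 ∧ p.1 ≠ p.2.2 ∧ p.2.1 < p.2.2

def IDset (n : ℕ) : Finset (Fin n × Fin n × Fin n × Fin n) :=
  Finset.univ.filter fun p =>
    p.1 < p.2.1 ∧ p.2.2.1 < p.2.2.2 ∧ p.1 < p.2.2.1 ∧ p.2.1 ≠ p.2.2.1 ∧ p.2.1 ≠ p.2.2.2

lemma card_ICset : (ICset n).card = 3 * n.choose 3 := by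
  have : (((Finset.univ : Finset (Fin n × Fin n × Fin n)).filter
      fun p => p.1 < p.2.1 ∧ p.2.1 < p.2.2) ×ˢ (Finset.univ : Finset (Fin 3))).card
      = n.choose 3 * 3 := by
    rw [Finset.card_product, card_sorted3, Finset.card_univ, Fintype.card_fin]
  rw [← Nat.mul_comm (n.choose 3) 3, ← this]
  apply Finset.card_bij (fun p _ =>
    if p.1 < p.2.1 then ((p.1, p.2.1, p.2.2), (0 : Fin 3))
    else if p.1 < p.2.2 then ((p.2.1, p.1, p.2.2), (1 : Fin 3))
    else ((p.2.1, p.2.2, p.1), (2 : Fin 3)))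
  · rintro ⟨i, j, k⟩ hp
    rw [ICset, Finset.mem_filter] at hp
    obtain ⟨-, hij, hik, hjk⟩ := hp
    split_ifs with h1 h2
    · exact Finset.mem_product.2 ⟨Finset.mem_filter.2 ⟨Finset.mem_univ _, h1, hjk⟩,
        Finset.mem_univ _⟩
    · have hji : j < i := lt_of_le_of_ne (not_lt.1 h1) hij.symm
      exact Finset.mem_product.2 ⟨Finset.mem_filter.2 ⟨Finset.mem_univ _, hji, h2⟩,
        Finset.mem_univ _⟩
    · have hji : j < i := lt_of_le_of_ne (not_lt.1 h1) hij.symm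
      have hki : k < i := lt_of_le_of_ne (not_lt.1 h2) hik.symm
      exact Finset.mem_product.2 ⟨Finset.mem_filter.2 ⟨Finset.mem_univ _, hjk, hki⟩,
        Finset.mem_univ _⟩
  · rintro ⟨i, j, k⟩ hp ⟨i', j', k'⟩ hq h
    split_ifs at h with h1 h2 h1' h2' h1' h2'
    all_goals simp only [Prod.mk.injEq] at h
    · obtain ⟨⟨e1, e2, e3⟩, -⟩ := h
      simp [e1, e2, e3]
    · exact absurd h.2 (by decide)
    · exact absurd h.2 (by decide)
    · exact absurd h.2 (by decide)
    · obtain ⟨⟨e1, e2, e3⟩, -⟩ := h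
      simp [e1, e2, e3]
    · exact absurd h.2 (by decide)
    · exact absurd h.2 (by decide)
    · exact absurd h.2 (by decide)
    · obtain ⟨⟨e1, e2, e3⟩, -⟩ := h
      simp [e1, e2, e3]
  · rintro ⟨⟨a, b, c⟩, m⟩ hq
    rw [Finset.mem_product, Finset.mem_filter] at hq
    obtain ⟨⟨-, hab, hbc⟩, -⟩ := hq
    have hac : a < c := hab.trans hbc
    fin_cases m
    · refine ⟨(a, b, c), ?_, ?_⟩
      · rw [ICset, Finset.mem_filter]
        exact ⟨Finset.mem_univ _, hab.ne, hac.ne, hbc⟩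
      · rw [if_pos hab]
        rfl
    · refine ⟨(b, a, c), ?_, ?_⟩
      · rw [ICset, Finset.mem_filter]
        exact ⟨Finset.mem_univ _, hab.ne', hbc.ne, hac⟩
      · rw [if_neg (asymm hab), if_pos hbc]
        rfl
    · refine ⟨(c, a, b), ?_, ?_⟩
      · rw [ICset, Finset.mem_filter]
        exact ⟨Finset.mem_univ _, hac.ne', hbc.ne', hab⟩
      · rw [if_neg (asymm hac), if_neg (asymm hbc)]
        rfl

lemma card_IDset : (IDset n).card = 3 * n.choose 4 := by
  have : (((Finset.univ : Finset (Fin n × Fin n × Fin n × Fin n)).filter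
      fun p => p.1 < p.2.1 ∧ p.2.1 < p.2.2.1 ∧ p.2.2.1 < p.2.2.2)
        ×ˢ (Finset.univ : Finset (Fin 3))).card = n.choose 4 * 3 := by
    rw [Finset.card_product, card_sorted4, Finset.card_univ, Fintype.card_fin]
  rw [← Nat.mul_comm (n.choose 4) 3, ← this]
  apply Finset.card_bij (fun p _ =>
    if p.2.1 < p.2.2.1 then ((p.1, p.2.1, p.2.2.1, p.2.2.2), (0 : Fin 3))
    else if p.2.1 < p.2.2.2 then ((p.1, p.2.2.1, p.2.1, p.2.2.2), (1 : Fin 3))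
    else ((p.1, p.2.2.1, p.2.2.2, p.2.1), (2 : Fin 3)))
  · rintro ⟨i, j, k, l⟩ hp
    rw [IDset, Finset.mem_filter] at hp
    obtain ⟨-, hij, hkl, hik, hjk, hjl⟩ := hp
    split_ifs with h1 h2
    · exact Finset.mem_product.2 ⟨Finset.mem_filter.2
        ⟨Finset.mem_univ _, hij, h1, hkl⟩, Finset.mem_univ _⟩
    · have hkj : k < j := lt_of_le_of_ne (not_lt.1 h1) hjk.symm
      exact Finset.mem_product.2 ⟨Finset.mem_filter.2
        ⟨Finset.mem_univ _, hik, hkj, h2⟩, Finset.mem_univ _⟩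
    · have hkj : k < j := lt_of_le_of_ne (not_lt.1 h1) hjk.symm
      have hlj : l < j := lt_of_le_of_ne (not_lt.1 h2) hjl.symm
      exact Finset.mem_product.2 ⟨Finset.mem_filter.2
        ⟨Finset.mem_univ _, hik, hkl, hlj⟩, Finset.mem_univ _⟩
  · rintro ⟨i, j, k, l⟩ hp ⟨i', j', k', l'⟩ hq h
    split_ifs at h with h1 h2 h1' h2' h1' h2'
    all_goals simp only [Prod.mk.injEq] at h
    · obtain ⟨⟨e1, e2, e3, e4⟩, -⟩ := h
      simp [e1, e2, e3, e4]
    · exact absurd h.2 (by decide)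
    · exact absurd h.2 (by decide)
    · exact absurd h.2 (by decide)
    · obtain ⟨⟨e1, e2, e3, e4⟩, -⟩ := h
      simp [e1, e2, e3, e4]
    · exact absurd h.2 (by decide)
    · exact absurd h.2 (by decide)
    · exact absurd h.2 (by decide)
    · obtain ⟨⟨e1, e2, e3, e4⟩, -⟩ := h
      simp [e1, e2, e3, e4]
  · rintro ⟨⟨a, b, c, d⟩, m⟩ hq
    rw [Finset.mem_product, Finset.mem_filter] at hq
    obtain ⟨⟨-, hab, hbc, hcd⟩, -⟩ := hq
    have hac : a < c := hab.trans hbc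
    have hbd : b < d := hbc.trans hcd
    have had : a < d := hab.trans hbd
    fin_cases m
    · refine ⟨(a, b, c, d), ?_, ?_⟩
      · rw [IDset, Finset.mem_filter]
        exact ⟨Finset.mem_univ _, hab, hcd, hac, hbc.ne, hbd.ne⟩
      · rw [if_pos hbc]
        rfl
    · refine ⟨(a, c, b, d), ?_, ?_⟩
      · rw [IDset, Finset.mem_filter]
        exact ⟨Finset.mem_univ _, hac, hbd, hab, hbc.ne', hcd.ne⟩
      · rw [if_neg (asymm hbc), if_pos hcd]
        rfl
    · refine ⟨(a, d, b, c), ?_, ?_⟩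
      · rw [IDset, Finset.mem_filter]
        exact ⟨Finset.mem_univ _, had, hbc, hab, hbd.ne', hcd.ne'⟩
      · rw [if_neg (asymm hbd), if_neg (asymm hcd)]
        rfl

end TypeBAux

namespace TypeBAux

variable {n : ℕ}

open Finset

def sg (s : Bool) : ℂ := if s then 1 else -1

lemma sg_or (s : Bool) : sg s = 1 ∨ sg s = -1 := by cases s <;> simp [sg]

lemma sg_inj {s t : Bool} (h : sg s = sg t) : s = t := by
  cases s <;> cases t <;> simp [sg] at h ⊢ <;> norm_num at h

lemma exists_sg {a : ℂ} (ha : a = 1 ∨ a = -1) : ∃ s : Bool, sg s = a := by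
  rcases ha with rfl | rfl
  · exact ⟨true, rfl⟩
  · exact ⟨false, rfl⟩

/-- counting type A flats -/
lemma countA : {F : Submodule ℂ (Fin n → ℂ) | IsA F}.ncard = n.choose 2 := by
  have himg : {F : Submodule ℂ (Fin n → ℂ) | IsA F} =
      (fun p : Fin n × Fin n => Pm p.1 ⊓ Pm p.2) ''
        ↑((Finset.univ : Finset (Fin n × Fin n)).filter fun p => p.1 < p.2) := by
    ext F
    constructor
    · rintro ⟨i, j, hij, rfl⟩
      exact ⟨(i, j), by simp [hij], rfl⟩
    · rintro ⟨p, hp, rfl⟩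
      simp only [Finset.coe_filter, Set.mem_setOf_eq] at hp
      exact ⟨p.1, p.2, hp.2, rfl⟩
  rw [himg, Set.ncard_image_of_injOn, Set.ncard_coe_finset, card_sorted2]
  rintro p hp q hq h
  simp only [Finset.coe_filter, Set.mem_setOf_eq] at hp hq
  obtain ⟨e1, e2⟩ := injA hp.2 hq.2 h
  exact Prod.ext e1 e2

/-- counting type T flats -/
lemma countT : {F : Submodule ℂ (Fin n → ℂ) | IsT F}.ncard = 4 * n.choose 3 := by
  have himg : {F : Submodule ℂ (Fin n → ℂ) | IsT F} =
      (fun q : (Fin n × Fin n × Fin n) × Bool × Bool =>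
          Hm q.1.1 q.1.2.1 (sg q.2.1) ⊓ Hm q.1.1 q.1.2.2 (sg q.2.2)) ''
        ↑((((Finset.univ : Finset (Fin n × Fin n × Fin n)).filter
            fun p => p.1 < p.2.1 ∧ p.2.1 < p.2.2)) ×ˢ
          (Finset.univ : Finset (Bool × Bool))) := by
    ext F
    constructor
    · rintro ⟨i, j, k, a, b, hij, hjk, ha, hb, rfl⟩
      obtain ⟨s, rfl⟩ := exists_sg ha
      obtain ⟨t, rfl⟩ := exists_sg hb
      exact ⟨((i, j, k), (s, t)), by simp [hij, hjk], rfl⟩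
    · rintro ⟨q, hq, rfl⟩
      rw [Finset.mem_coe, Finset.mem_product, Finset.mem_filter] at hq
      exact ⟨q.1.1, q.1.2.1, q.1.2.2, sg q.2.1, sg q.2.2, hq.1.2.1, hq.1.2.2,
        sg_or _, sg_or _, rfl⟩
  rw [himg, Set.ncard_image_of_injOn, Set.ncard_coe_finset, Finset.card_product,
    card_sorted3, Finset.card_univ]
  · simp only [Fintype.card_prod, Fintype.card_bool]
    ring
  · rintro q hq r hr h
    rw [Finset.mem_coe, Finset.mem_product, Finset.mem_filter] at hq hr
    obtain ⟨e1, e2, e3, e4, e5⟩ := injT hq.1.2.1 hq.1.2.2 hr.1.2.1 hr.1.2.2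
      (sg_or _) (sg_or _) (sg_or _) (sg_or _) h
    exact Prod.ext (Prod.ext e1 (Prod.ext e2 e3))
      (Prod.ext (sg_inj e4) (sg_inj e5))

lemma imgC : {F : Submodule ℂ (Fin n → ℂ) | IsC F} =
    (fun q : (Fin n × Fin n × Fin n) × Bool =>
        Pm q.1.1 ⊓ Hm q.1.2.1 q.1.2.2 (sg q.2)) ''
      ↑(ICset n ×ˢ (Finset.univ : Finset Bool)) := by
  ext F
  constructor
  · rintro ⟨i, j, k, a, hij, hik, hjk, ha, rfl⟩
    obtain ⟨s, rfl⟩ := exists_sg ha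
    refine ⟨((i, j, k), s), ?_, rfl⟩
    rw [Finset.mem_coe, Finset.mem_product, ICset, Finset.mem_filter]
    exact ⟨⟨Finset.mem_univ _, hij, hik, hjk⟩, Finset.mem_univ _⟩
  · rintro ⟨q, hq, rfl⟩
    rw [Finset.mem_coe, Finset.mem_product, ICset, Finset.mem_filter] at hq
    exact ⟨q.1.1, q.1.2.1, q.1.2.2, sg q.2, hq.1.2.1, hq.1.2.2.1, hq.1.2.2.2,
      sg_or _, rfl⟩

lemma imgD : {F : Submodule ℂ (Fin n → ℂ) | IsD F} =
    (fun q : (Fin n × Fin n × Fin n × Fin n) × Bool × Bool =>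
        Hm q.1.1 q.1.2.1 (sg q.2.1) ⊓ Hm q.1.2.2.1 q.1.2.2.2 (sg q.2.2)) ''
      ↑(IDset n ×ˢ (Finset.univ : Finset (Bool × Bool))) := by
  ext F
  constructor
  · rintro ⟨i, j, k, l, a, b, hij, hkl, hik, hjk, hjl, ha, hb, rfl⟩
    obtain ⟨s, rfl⟩ := exists_sg ha
    obtain ⟨t, rfl⟩ := exists_sg hb
    refine ⟨((i, j, k, l), (s, t)), ?_, rfl⟩
    rw [Finset.mem_coe, Finset.mem_product, IDset, Finset.mem_filter]
    exact ⟨⟨Finset.mem_univ _, hij, hkl, hik, hjk, hjl⟩, Finset.mem_univ _⟩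
  · rintro ⟨q, hq, rfl⟩
    rw [Finset.mem_coe, Finset.mem_product, IDset, Finset.mem_filter] at hq
    exact ⟨q.1.1, q.1.2.1, q.1.2.2.1, q.1.2.2.2, sg q.2.1, sg q.2.2,
      hq.1.2.1, hq.1.2.2.1, hq.1.2.2.2.1, hq.1.2.2.2.2.1, hq.1.2.2.2.2.2,
      sg_or _, sg_or _, rfl⟩

lemma C_ne_D {F : Submodule ℂ (Fin n → ℂ)} (hC : IsC F) (hD : IsD F) : False := by
  obtain ⟨i, j, k, a, hij, hik, hjk, ha, rfl⟩ := hC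
  obtain ⟨i', j', k', l', a', b', hij', hkl', hik', hjk', hjl', ha', hb', heq⟩ := hD
  have h1 := flatC_hyps hjk hij hik ha
  rw [heq, flatD_hyps hij' hkl' hik' hjk' hjl' ha' hb'] at h1
  have : Pm i ∈ ({Hm i' j' a', Hm k' l' b'} :
      Set (Submodule ℂ (Fin n → ℂ))) := by
    rw [h1]; exact Set.mem_insert _ _
  rcases this with h | h
  · exact Pm_ne_Hm hij'.ne (sgn_ne_zero ha') h
  · exact Pm_ne_Hm hkl'.ne (sgn_ne_zero hb') h

lemma count2 : {F : Submodule ℂ (Fin n → ℂ) | IsC F ∨ IsD F}.ncard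
    = 6 * n.choose 3 + 12 * n.choose 4 := by
  have hsplit : {F : Submodule ℂ (Fin n → ℂ) | IsC F ∨ IsD F} =
      {F | IsC F} ∪ {F | IsD F} := rfl
  have hdisj : Disjoint {F : Submodule ℂ (Fin n → ℂ) | IsC F} {F | IsD F} := by
    rw [Set.disjoint_left]
    intro F hC hD
    exact C_ne_D hC hD
  have hfinC : {F : Submodule ℂ (Fin n → ℂ) | IsC F}.Finite := by
    rw [imgC]; exact ((ICset n ×ˢ Finset.univ).finite_toSet).image _
  have hfinD : {F : Submodule ℂ (Fin n → ℂ) | IsD F}.Finite := by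
    rw [imgD]; exact ((IDset n ×ˢ Finset.univ).finite_toSet).image _
  rw [hsplit, Set.ncard_union_eq hdisj hfinC hfinD]
  have cC : {F : Submodule ℂ (Fin n → ℂ) | IsC F}.ncard = 6 * n.choose 3 := by
    rw [imgC, Set.ncard_image_of_injOn, Set.ncard_coe_finset, Finset.card_product,
      card_ICset, Finset.card_univ, Fintype.card_bool]
    · ring
    · rintro q hq r hr h
      rw [Finset.mem_coe, Finset.mem_product, ICset, Finset.mem_filter] at hq hr
      obtain ⟨e1, e2, e3, e4⟩ := injC hq.1.2.1 hq.1.2.2.1 hq.1.2.2.2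
        hr.1.2.1 hr.1.2.2.1 hr.1.2.2.2 (sg_or _) (sg_or _) h
      exact Prod.ext (Prod.ext e1 (Prod.ext e2 e3)) (sg_inj e4)
  have cD : {F : Submodule ℂ (Fin n → ℂ) | IsD F}.ncard = 12 * n.choose 4 := by
    rw [imgD, Set.ncard_image_of_injOn, Set.ncard_coe_finset, Finset.card_product,
      card_IDset, Finset.card_univ]
    · simp only [Fintype.card_prod, Fintype.card_bool]
      ring
    · rintro q hq r hr h
      rw [Finset.mem_coe, Finset.mem_product, IDset, Finset.mem_filter] at hq hr
      obtain ⟨e1, e2, e3, e4, e5, e6⟩ := injD hq.1.2.1 hq.1.2.2.1 hq.1.2.2.2.1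
        hq.1.2.2.2.2.1 hq.1.2.2.2.2.2 hr.1.2.1 hr.1.2.2.1 hr.1.2.2.2.1
        hr.1.2.2.2.2.1 hr.1.2.2.2.2.2 (sg_or _) (sg_or _) (sg_or _) (sg_or _) h
      exact Prod.ext (Prod.ext e1 (Prod.ext e2 (Prod.ext e3 e4)))
        (Prod.ext (sg_inj e5) (sg_inj e6))
  rw [cC, cD]

end TypeBAux


/-- The Coxeter arrangement `B_n` has exactly `C(n,2)` rank-two flats of
multiplicity `4`, exactly `4 * C(n,3)` rank-two flats of multiplicity `3`, and
exactly `6 * C(n,3) + 12 * C(n,4)` rank-two flats of multiplicity `2`. -/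
theorem typeB_rank_two_flats (n : ℕ) :
    {F ∈ rankTwoFlats (typeBArrangement n) |
        flatMultiplicity (typeBArrangement n) F = 4}.ncard = n.choose 2 ∧
    {F ∈ rankTwoFlats (typeBArrangement n) |
        flatMultiplicity (typeBArrangement n) F = 3}.ncard = 4 * n.choose 3 ∧
    {F ∈ rankTwoFlats (typeBArrangement n) |
        flatMultiplicity (typeBArrangement n) F = 2}.ncard
      = 6 * n.choose 3 + 12 * n.choose 4 := by
  refine ⟨?_, ?_, ?_⟩
  · rw [TypeBAux.S4_eq]; exact TypeBAux.countA
  · rw [TypeBAux.S3_eq]; exact TypeBAux.countT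
  · rw [TypeBAux.S2_eq]; exact TypeBAux.count2
end

section
/- Let E be the exterior algebra over a field k of characteristic 0 generated in degree 1 by elements e_{p,q}, 1 ≤ p ≠ q ≤ n (n ≥ 3), and let I be the ideal generated by e_{i,j}∧e_{j,i} (i<j) and (e_{k,i}-e_{j,i})∧(e_{k,j}-e_{i,j}) (i<j, k ∉ {i,j}). Then for any 1 ≤ i < j < k ≤ n, the element (e_{j,i}-e_{k,i})∧(e_{i,j}-e_{k,j}) lies in I, so the 3-dimensional subspace C_{i,j,k} = span{e_{j,i}-e_{k,i}, e_{i,j}-e_{k,j}, e_{i,k}-e_{j,k}} is isotropic for the multiplication map E^1∧E^1 → E^2/I^2. -/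
/-!
Each pairwise product of the three spanning vectors of `C_{i,j,k}` is, up to sign, a defining
relation of the second kind, for the triples `(i,j,k)`, `(j,k,i)` and `(i,k,j)`. Degree-one
elements anticommute and square to zero, so the remaining products lie in `I` as well, and
bilinearity of the product carries this from the spanning vectors to their span.
-/

open ExteriorAlgebra

/-- The generator `e_{p,q}` (for `p ≠ q`) of the exterior algebra modeling the
cohomology of the basis-conjugating automorphism group `PΣ_n`. -/
noncomputable def eGen (K : Type*) [Field K] (n : ℕ) (p q : Fin n) (h : p ≠ q) :
    ExteriorAlgebra K ({pq : Fin n × Fin n // pq.1 ≠ pq.2} → K) :=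
  ι K (Pi.single ⟨(p, q), h⟩ (1 : K))

/-- The Jensen–McCammond–Meier relation ideal of `PΣ_n`: the two-sided ideal
generated by `e_{i,j} e_{j,i}` (`i < j`) and
`(e_{k,i} - e_{j,i})(e_{k,j} - e_{i,j})` (`i < j`, `k ∉ {i,j}`). -/
noncomputable def JMMIdeal (K : Type*) [Field K] (n : ℕ) :
    TwoSidedIdeal (ExteriorAlgebra K ({pq : Fin n × Fin n // pq.1 ≠ pq.2} → K)) :=
  TwoSidedIdeal.span
    ({z | ∃ (i j : Fin n) (h : i < j), z = eGen K n i j h.ne * eGen K n j i h.ne'} ∪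
     {z | ∃ (i j k : Fin n) (h : i < j) (hki : k ≠ i) (hkj : k ≠ j),
        z = (eGen K n k i hki - eGen K n j i h.ne') *
            (eGen K n k j hkj - eGen K n i j h.ne)})

namespace TwoSidedIdeal

variable {R A : Type*} [CommSemiring R] [Ring A] [Algebra R A]

theorem mul_mem_of_mem_span (I : TwoSidedIdeal A) {S : Set A}
    (hS : ∀ x ∈ S, ∀ y ∈ S, x * y ∈ I) {u v : A}
    (hu : u ∈ Submodule.span R S) (hv : v ∈ Submodule.span R S) : u * v ∈ I := by
  have hle : Submodule.span R S * Submodule.span R S ≤ I.asIdeal.restrictScalars R := by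
    rw [Submodule.span_mul_span, Submodule.span_le]
    rintro _ ⟨x, hx, y, hy, rfl⟩
    exact mem_asIdeal.mpr (hS x hx y hy)
  exact mem_asIdeal.mp (hle (Submodule.mul_mem_mul hu hv))

end TwoSidedIdeal

namespace ExteriorAlgebra

variable {R M : Type*} [CommRing R] [AddCommGroup M] [Module R M]
  {I : TwoSidedIdeal (ExteriorAlgebra R M)}

theorem ι_mul_ι_mem_swap {x y : M} (h : ι R x * ι R y ∈ I) : ι R y * ι R x ∈ I := by
  rw [eq_neg_of_add_eq_zero_left (ι_add_mul_swap y x)]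
  exact I.neg_mem h

theorem mul_mem_of_mem_span_image_ι {S : Set M} (hS : S.Pairwise fun x y => ι R x * ι R y ∈ I)
    {u v : ExteriorAlgebra R M} (hu : u ∈ Submodule.span R (ι R '' S))
    (hv : v ∈ Submodule.span R (ι R '' S)) : u * v ∈ I := by
  refine I.mul_mem_of_mem_span ?_ hu hv
  rintro _ ⟨x, hx, rfl⟩ _ ⟨y, hy, rfl⟩
  obtain rfl | hxy := eq_or_ne x y
  · rw [ι_sq_zero]
    exact I.zero_mem
  · exact hS hx hy hxy

theorem pairwise_ι_mul_mem_of_triple {x y z : M} (hxy : ι R x * ι R y ∈ I)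
    (hyz : ι R y * ι R z ∈ I) (hxz : ι R x * ι R z ∈ I) :
    ({x, y, z} : Set M).Pairwise fun a b => ι R a * ι R b ∈ I := by
  rintro a (rfl | rfl | rfl) b (rfl | rfl | rfl) hab <;>
    first
      | exact (hab rfl).elim
      | exact hxy | exact hyz | exact hxz
      | exact ι_mul_ι_mem_swap hxy | exact ι_mul_ι_mem_swap hyz | exact ι_mul_ι_mem_swap hxz

end ExteriorAlgebra

theorem eGen_sub_eGen (K : Type*) [Field K] (n : ℕ) {p q p' q' : Fin n} (h : p ≠ q)
    (h' : p' ≠ q') :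
    eGen K n p q h - eGen K n p' q' h' =
      ι K (Pi.single ⟨(p, q), h⟩ 1 - Pi.single ⟨(p', q'), h'⟩ 1) :=
  (map_sub _ _ _).symm

theorem sub_mul_sub_mem_JMMIdeal (K : Type*) [Field K] (n : ℕ) {i j k : Fin n} (h : i < j)
    (hki : k ≠ i) (hkj : k ≠ j) :
    (eGen K n k i hki - eGen K n j i h.ne') * (eGen K n k j hkj - eGen K n i j h.ne) ∈
      JMMIdeal K n :=
  TwoSidedIdeal.subset_span (Or.inr ⟨i, j, k, h, hki, hkj, rfl⟩)

theorem PSigma_triple_component_isotropic_general (K : Type*) [Field K]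
    (n : ℕ) (i j k : Fin n) (hij : i < j) (hjk : j < k) :
    ((eGen K n j i hij.ne' - eGen K n k i (hij.trans hjk).ne') *
        (eGen K n i j hij.ne - eGen K n k j hjk.ne') ∈ JMMIdeal K n) ∧
    ∀ u v : ExteriorAlgebra K ({pq : Fin n × Fin n // pq.1 ≠ pq.2} → K),
      u ∈ Submodule.span K
        {eGen K n j i hij.ne' - eGen K n k i (hij.trans hjk).ne',
         eGen K n i j hij.ne - eGen K n k j hjk.ne',
         eGen K n i k (hij.trans hjk).ne - eGen K n j k hjk.ne} →
      v ∈ Submodule.span K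
        {eGen K n j i hij.ne' - eGen K n k i (hij.trans hjk).ne',
         eGen K n i j hij.ne - eGen K n k j hjk.ne',
         eGen K n i k (hij.trans hjk).ne - eGen K n j k hjk.ne} →
      u * v ∈ JMMIdeal K n := by
  have hik := hij.trans hjk
  have hab : (eGen K n j i hij.ne' - eGen K n k i hik.ne') *
      (eGen K n i j hij.ne - eGen K n k j hjk.ne') ∈ JMMIdeal K n := by
    rw [← neg_mul_neg, neg_sub, neg_sub]
    exact sub_mul_sub_mem_JMMIdeal K n hij hik.ne' hjk.ne'
  have hbc := sub_mul_sub_mem_JMMIdeal K n hjk hij.ne hik.ne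
  have hac : (eGen K n j i hij.ne' - eGen K n k i hik.ne') *
      (eGen K n i k hik.ne - eGen K n j k hjk.ne) ∈ JMMIdeal K n := by
    rw [← neg_sub (eGen K n j k hjk.ne), mul_neg]
    exact (JMMIdeal K n).neg_mem (sub_mul_sub_mem_JMMIdeal K n hik hij.ne' hjk.ne)
  refine ⟨hab, fun u v hu hv => ?_⟩
  simp only [eGen_sub_eGen] at hab hbc hac hu hv
  rw [← Set.image_pair, ← Set.image_insert_eq] at hu hv
  exact mul_mem_of_mem_span_image_ι (pairwise_ι_mul_mem_of_triple hab hbc hac) hu hv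

/-- For `i < j < k`, the element `(e_{j,i} - e_{k,i})(e_{i,j} - e_{k,j})` lies
in the relation ideal `I` of `PΣ_n`, and the three-dimensional subspace
`C_{i,j,k} = span{e_{j,i} - e_{k,i}, e_{i,j} - e_{k,j}, e_{i,k} - e_{j,k}}` is
isotropic for the multiplication map `E^1 ∧ E^1 → E^2/I^2`: the product of any
two of its elements lies in `I`. -/
theorem PSigma_triple_component_isotropic (K : Type*) [Field K] [CharZero K]
    (n : ℕ) (hn : 3 ≤ n) (i j k : Fin n) (hij : i < j) (hjk : j < k) :
    ((eGen K n j i hij.ne' - eGen K n k i (hij.trans hjk).ne') *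
        (eGen K n i j hij.ne - eGen K n k j hjk.ne') ∈ JMMIdeal K n) ∧
    ∀ u v : ExteriorAlgebra K ({pq : Fin n × Fin n // pq.1 ≠ pq.2} → K),
      u ∈ Submodule.span K
        {eGen K n j i hij.ne' - eGen K n k i (hij.trans hjk).ne',
         eGen K n i j hij.ne - eGen K n k j hjk.ne',
         eGen K n i k (hij.trans hjk).ne - eGen K n j k hjk.ne} →
      v ∈ Submodule.span K
        {eGen K n j i hij.ne' - eGen K n k i (hij.trans hjk).ne',
         eGen K n i j hij.ne - eGen K n k j hjk.ne',
         eGen K n i k (hij.trans hjk).ne - eGen K n j k hjk.ne} →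
      u * v ∈ JMMIdeal K n :=
  PSigma_triple_component_isotropic_general K n i j k hij hjk
end

section
/- In the exterior algebra E = Λ(e_{1,2}, e_{1,3}, e_{1,4}, e_{2,3}, e_{2,4}, e_{3,4}) over a field of characteristic 0 with ideal I⁺ generated by e_{j,k}∧(e_{i,k}-e_{i,j}) for 1 ≤ i < j < k ≤ 4 (the Orlik–Solomon-type ideal of the upper triangular McCool group PΣ_4^+), the element e_{2,4}∧(e_{1,4}-e_{1,2}) - e_{2,3}∧(e_{1,3}-e_{1,2}) lies in I⁺, and l ∧ (e_{2,4}∧(e_{1,4}-e_{1,2}) - e_{2,3}∧(e_{1,3}-e_{1,2})) lies in the ideal generated by Λ^2 L for every l ∈ L = span{e_{1,3}-e_{1,4}, e_{2,3}-e_{2,4}, e_{3,4}}, but the element itself does not lie in the ideal generated by Λ^2 L. -/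
open ExteriorAlgebra

noncomputable section

variable (K : Type*) [Field K] [CharZero K]

/-- The index set `{(i,j) : 1 ≤ i < j ≤ 4}` of the generators `e_{i,j}`. -/
abbrev UpIdx := {p : Fin 4 × Fin 4 // p.1 < p.2}

/-- The generator `e_{i,j}` (for `i < j`) of the exterior algebra on the six
generators `e_{1,2}, ..., e_{3,4}`. -/
def eUp (i j : Fin 4) (h : i < j) : ExteriorAlgebra K (UpIdx → K) :=
  ι K (Pi.single ⟨(i, j), h⟩ (1 : K))

/-- The relation ideal `I⁺` of the upper triangular McCool group `PΣ_4^+`: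
generated by `e_{j,k}(e_{i,k} - e_{i,j})`, `1 ≤ i < j < k ≤ 4`. -/
def IUp : TwoSidedIdeal (ExteriorAlgebra K (UpIdx → K)) :=
  TwoSidedIdeal.span
    {z | ∃ (i j k : Fin 4) (hij : i < j) (hjk : j < k),
      z = eUp K j k hjk * (eUp K i k (hij.trans hjk) - eUp K i j hij)}

/-- The subspace `L = span{e_{1,3} - e_{1,4}, e_{2,3} - e_{2,4}, e_{3,4}}`. -/
def Lup : Submodule K (ExteriorAlgebra K (UpIdx → K)) :=
  Submodule.span K
    {eUp K 0 2 (by decide) - eUp K 0 3 (by decide),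
     eUp K 1 2 (by decide) - eUp K 1 3 (by decide),
     eUp K 2 3 (by decide)}

/-- The ideal `I_L` generated by all products `u ∧ v` with `u, v ∈ L`. -/
def ILup : TwoSidedIdeal (ExteriorAlgebra K (UpIdx → K)) :=
  TwoSidedIdeal.span {z | ∃ u ∈ Lup K, ∃ v ∈ Lup K, z = u * v}

/-!
Write `X = e_{1,3} - e_{1,4}` and `Y = e_{2,3} - e_{2,4}`, so that `X, Y ∈ L` and
`g = Y (e_{1,2} - e_{1,4}) - e_{2,3} X`. For `l ∈ L` both `l Y` and `e_{2,3} l X = -l e_{2,3} X`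
lie in `I_L`, hence so does `l g`. To see `g ∉ I_L`, let `f` be the linear endomorphism sending
`e_{2,3}, e_{2,4} ↦ e_{2,3}`, `e_{1,3} ↦ e_{1,3}` and the other generators to `0`. It maps `L` onto
the line spanned by `e_{1,3}`, so the induced algebra map `Λ f` kills every product of two
elements of `L`, hence all of `I_L`; but `Λ f (g) = -e_{2,3} e_{1,3} ≠ 0`.
-/

section ProductIdeal

variable {R A : Type*} [Semiring R] [Ring A] [Module R A]

def productIdeal (L : Submodule R A) : TwoSidedIdeal A :=
  TwoSidedIdeal.span {z | ∃ u ∈ L, ∃ v ∈ L, z = u * v}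

theorem mul_mem_productIdeal {L : Submodule R A} {u v : A} (hu : u ∈ L) (hv : v ∈ L) :
    u * v ∈ productIdeal L :=
  TwoSidedIdeal.subset_span ⟨u, hu, v, hv, rfl⟩

end ProductIdeal

namespace ExteriorAlgebra

section CommRing

variable {R M N : Type*} [CommRing R] [AddCommGroup M] [Module R M] [AddCommGroup N] [Module R N]

theorem ι_mul_ι_mul_comm (a b : M) (x : ExteriorAlgebra R M) :
    ι R a * (ι R b * x) = -(ι R b * (ι R a * x)) := by
  rw [← mul_assoc, ← mul_assoc, ← neg_mul, eq_neg_of_add_eq_zero_left (ι_add_mul_swap a b)]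

theorem mul_ι_mul_mem_productIdeal {L : Submodule R (ExteriorAlgebra R M)}
    (hL : L ≤ LinearMap.range (ι R)) {l x : ExteriorAlgebra R M} (hl : l ∈ L) (hx : x ∈ L)
    (a : M) : l * (ι R a * x) ∈ productIdeal L := by
  obtain ⟨b, rfl⟩ := hL hl
  rw [ι_mul_ι_mul_comm]
  exact neg_mem ((productIdeal L).mul_mem_left _ _ (mul_mem_productIdeal hl hx))

theorem productIdeal_le_ker_map {L : Submodule R (ExteriorAlgebra R M)} {f : M →ₗ[R] N} {w : N}
    (hL : L ≤ (R ∙ ι R w).comap (map f).toLinearMap) :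
    productIdeal L ≤ TwoSidedIdeal.ker (map f) := by
  refine TwoSidedIdeal.span_le.mpr ?_
  rintro _ ⟨u, hu, v, hv, rfl⟩
  obtain ⟨c, hc⟩ := Submodule.mem_span_singleton.mp (hL hu)
  obtain ⟨d, hd⟩ := Submodule.mem_span_singleton.mp (hL hv)
  rw [SetLike.mem_coe, TwoSidedIdeal.mem_ker, map_mul]
  simp only [AlgHom.toLinearMap_apply] at hc hd
  rw [← hc, ← hd, smul_mul_smul_comm, ι_sq_zero, smul_zero]

end CommRing

section Field

variable {F E : Type*} [Field F] [AddCommGroup E] [Module F E]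

theorem ι_mul_ι_ne_zero {a b : E} (h : LinearIndependent F ![a, b]) :
    ι F a * ι F b ≠ 0 := by
  have := (exteriorPower.ιMulti_family_linearIndependent_field (n := 2) h).ne_zero
    (Set.powersetCard.ofFinEmbEquiv (OrderIso.refl (Fin 2)).toOrderEmbedding)
  contrapose! this
  rw [← Subtype.coe_inj]
  simpa [exteriorPower.ιMulti_family_apply_coe, ιMulti_apply] using this

theorem ι_single_mul_ι_single_ne_zero {σ : Type*} [DecidableEq σ] {p q : σ} (h : p ≠ q) :
    ι F (Pi.single p 1 : σ → F) * ι F (Pi.single q 1 : σ → F) ≠ 0 :=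
  ι_mul_ι_ne_zero <| LinearIndependent.pair_iff.mpr fun s t hst =>
    ⟨by simpa [h] using congrFun hst p, by simpa [h.symm] using congrFun hst q⟩

end Field

end ExteriorAlgebra

namespace UpperMcCool

variable (F : Type*) [Field F]

/-- The element `g = e_{2,4}(e_{1,4} - e_{1,2}) - e_{2,3}(e_{1,3} - e_{1,2})`. -/
def gUp : ExteriorAlgebra F (UpIdx → F) :=
  eUp F 1 3 (by decide) * (eUp F 0 3 (by decide) - eUp F 0 1 (by decide)) -
    eUp F 1 2 (by decide) * (eUp F 0 2 (by decide) - eUp F 0 1 (by decide))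

theorem gUp_mem_IUp : gUp F ∈ IUp F :=
  (IUp F).sub_mem (TwoSidedIdeal.subset_span ⟨0, 1, 3, by decide, by decide, rfl⟩)
    (TwoSidedIdeal.subset_span ⟨0, 1, 2, by decide, by decide, rfl⟩)

theorem gUp_eq :
    gUp F = (eUp F 1 2 (by decide) - eUp F 1 3 (by decide)) *
        (eUp F 0 1 (by decide) - eUp F 0 3 (by decide)) -
      eUp F 1 2 (by decide) * (eUp F 0 2 (by decide) - eUp F 0 3 (by decide)) := by
  rw [gUp]
  noncomm_ring

theorem ILup_eq : ILup F = productIdeal (Lup F) := rfl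

theorem Lup_le_range_ι : Lup F ≤ LinearMap.range (ι F) := by
  refine Submodule.span_le.mpr ?_
  rintro _ (rfl | rfl | rfl)
  · exact ⟨_, map_sub (ι F) _ _⟩
  · exact ⟨_, map_sub (ι F) _ _⟩
  · exact ⟨_, rfl⟩

theorem mul_gUp_mem_ILup {l : ExteriorAlgebra F (UpIdx → F)} (hl : l ∈ Lup F) :
    l * gUp F ∈ ILup F := by
  have hX : eUp F 0 2 (by decide) - eUp F 0 3 (by decide) ∈ Lup F :=
    Submodule.subset_span (by simp)
  have hY : eUp F 1 2 (by decide) - eUp F 1 3 (by decide) ∈ Lup F :=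
    Submodule.subset_span (by simp)
  rw [gUp_eq, mul_sub, ← mul_assoc, ILup_eq]
  exact sub_mem ((productIdeal _).mul_mem_right _ _ (mul_mem_productIdeal hl hY))
    (mul_ι_mul_mem_productIdeal (Lup_le_range_ι F) hl hX _)

def collapse : (UpIdx → F) →ₗ[F] (UpIdx → F) :=
  LinearMap.smulRight
      (LinearMap.proj (R := F) (⟨(1, 2), by decide⟩ : UpIdx) + LinearMap.proj ⟨(1, 3), by decide⟩)
      (Pi.single ⟨(1, 2), by decide⟩ 1) +
    LinearMap.smulRight (LinearMap.proj (R := F) (⟨(0, 2), by decide⟩ : UpIdx))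
      (Pi.single ⟨(0, 2), by decide⟩ 1)

theorem map_collapse_X :
    map (collapse F) (eUp F 0 2 (by decide) - eUp F 0 3 (by decide)) = eUp F 0 2 (by decide) := by
  simp [collapse, eUp]

theorem map_collapse_Y :
    map (collapse F) (eUp F 1 2 (by decide) - eUp F 1 3 (by decide)) = 0 := by
  simp [collapse, eUp]

theorem map_collapse_e34 : map (collapse F) (eUp F 2 3 (by decide)) = 0 := by
  simp [collapse, eUp]

theorem map_collapse_e23 : map (collapse F) (eUp F 1 2 (by decide)) = eUp F 1 2 (by decide) := by
  simp [collapse, eUp]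

theorem ILup_le_ker_map_collapse : ILup F ≤ TwoSidedIdeal.ker (map (collapse F)) := by
  refine productIdeal_le_ker_map (w := Pi.single ⟨(0, 2), by decide⟩ 1) (Submodule.span_le.mpr ?_)
  rintro _ (rfl | rfl | rfl) <;> simp only [SetLike.mem_coe, Submodule.mem_comap,
    AlgHom.toLinearMap_apply, map_collapse_X, map_collapse_Y, map_collapse_e34]
  · exact Submodule.mem_span_singleton_self _
  · exact zero_mem _
  · exact zero_mem _

theorem gUp_notMem_ILup : gUp F ∉ ILup F := fun hg => by
  have hker := TwoSidedIdeal.mem_ker _ |>.mp (ILup_le_ker_map_collapse F hg)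
  rw [gUp_eq, map_sub, map_mul, map_mul, map_collapse_X, map_collapse_Y, map_collapse_e23,
    zero_mul, zero_sub, neg_eq_zero] at hker
  exact ι_single_mul_ι_single_ne_zero (by decide) hker

end UpperMcCool

/-- In the exterior algebra on `e_{1,2}, ..., e_{3,4}` with the relation ideal
`I⁺` of `PΣ_4^+`, the element
`g = e_{2,4}(e_{1,4} - e_{1,2}) - e_{2,3}(e_{1,3} - e_{1,2})` lies in `I⁺`, and
`l ∧ g ∈ I_L` for every `l ∈ L = span{e_{1,3}-e_{1,4}, e_{2,3}-e_{2,4}, e_{3,4}}`,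
but `g ∉ I_L`. -/
theorem upper_McCool_JL_ne_IL :
    (eUp K 1 3 (by decide) * (eUp K 0 3 (by decide) - eUp K 0 1 (by decide)) -
        eUp K 1 2 (by decide) * (eUp K 0 2 (by decide) - eUp K 0 1 (by decide))
        ∈ IUp K) ∧
    (∀ l ∈ Lup K,
      l * (eUp K 1 3 (by decide) * (eUp K 0 3 (by decide) - eUp K 0 1 (by decide)) -
        eUp K 1 2 (by decide) * (eUp K 0 2 (by decide) - eUp K 0 1 (by decide)))
        ∈ ILup K) ∧
    (eUp K 1 3 (by decide) * (eUp K 0 3 (by decide) - eUp K 0 1 (by decide)) -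
        eUp K 1 2 (by decide) * (eUp K 0 2 (by decide) - eUp K 0 1 (by decide))
        ∉ ILup K) :=
  ⟨UpperMcCool.gUp_mem_IUp K, fun _ hl => UpperMcCool.mul_gUp_mem_ILup K hl,
    UpperMcCool.gUp_notMem_ILup K⟩

end
end
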